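/- arXiv:1508.00268 — 6 statements merged into one kernel-verified Lean document; each statement's English description precedes it below -/
import Mathlib

section
/- Let Γ be a finitely generated saturated submonoid of a finitely generated free abelian group Λ with ℤΓ = Λ, let E ⊆ Γ be a finite set generating Γ as a monoid, and let ρ ∈ Hom_ℤ(Λ, ℤ) be a primitive element that is an extremal ray generator of the dual cone K. Then there exists μ ∈ E with ρ(μ) = 1. -/
/-- `ρ` is an extremal ray generator of the convex cone `K` (in a `ℚ`-vector space `W`):
`ρ` is a nonzero element of `K` and whenever `x, y ∈ K` with `x + y ∈ ℚ≥0·ρ`,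
both `x` and `y` lie in `ℚ≥0·ρ`. -/
def IsExtremalRayGen {W : Type*} [AddCommGroup W] [Module ℚ W] (K : Set W) (ρ : W) : Prop :=
  ρ ∈ K ∧ ρ ≠ 0 ∧ ∀ x ∈ K, ∀ y ∈ K,
    (∃ c : ℚ, 0 ≤ c ∧ x + y = c • ρ) →
    (∃ c : ℚ, 0 ≤ c ∧ x = c • ρ) ∧ (∃ c : ℚ, 0 ≤ c ∧ y = c • ρ)

/-- Let `Γ` be a finitely generated saturated submonoid of a finitely
generated free abelian group `Λ` with `ℤΓ = Λ`, let `E ⊆ Γ` be a finite set generating `Γ`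
as a monoid, and let `ρ ∈ Hom_ℤ(Λ, ℤ)` be a primitive element that is an extremal ray
generator of the dual cone `K = {ξ ∈ Hom_ℤ(Λ, ℚ) : ξ ≥ 0 on Γ}`.
Then there exists `μ ∈ E` with `ρ(μ) = 1`.  (Saturatedness of `Γ`, i.e.
`Γ = Λ ∩ ℚ≥0Γ`, is expressed by: if a positive multiple of `v ∈ Λ` lies in `Γ`
then `v ∈ Γ`.) -/
theorem exists_generator_with_value_one
    {Λ : Type*} [AddCommGroup Λ] [Module.Free ℤ Λ] [Module.Finite ℤ Λ]
    (Γ : AddSubmonoid Λ) (hΓfg : Γ.FG)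
    (hZΓ : AddSubgroup.closure (Γ : Set Λ) = ⊤)
    (hsat : ∀ v : Λ, (∃ n : ℕ, 0 < n ∧ n • v ∈ Γ) → v ∈ Γ)
    (E : Finset Λ) (hEΓ : ∀ x ∈ E, x ∈ Γ)
    (hEgen : AddSubmonoid.closure (E : Set Λ) = Γ)
    (ρ : Λ →ₗ[ℤ] ℤ)
    (hprim : ∀ (n : ℕ) (w : Λ →ₗ[ℤ] ℤ), 0 < n → ρ = n • w → n = 1)
    (hext : IsExtremalRayGen {ξ : Λ →ₗ[ℤ] ℚ | ∀ γ ∈ Γ, 0 ≤ ξ γ}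
      ((Int.castAddHom ℚ).toIntLinearMap.comp ρ)) :
    ∃ μ ∈ E, ρ μ = 1 := by
  classical
  set ρℚ := (Int.castAddHom ℚ).toIntLinearMap.comp ρ with hρℚdef
  -- ρ is nonnegative on Γ
  have hρΓ : ∀ γ ∈ Γ, 0 ≤ ρ γ := by
    intro γ hγ
    have := hext.1 γ hγ
    simpa [ρℚ] using this
  -- ρ ≠ 0
  have hρ0 : ρ ≠ 0 := by
    intro h
    apply hext.2.1
    ext x
    simp [ρℚ, h]
  -- Step 1: there is v with ρ v = 1, by primitivity
  have hv : ∃ v : Λ, ρ v = 1 := by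
    obtain ⟨d, hd⟩ := (IsPrincipalIdealRing.principal (LinearMap.range ρ : Ideal ℤ)).principal
    have hd0 : d ≠ 0 := by
      rintro rfl
      apply hρ0
      ext x
      have : ρ x ∈ LinearMap.range ρ := ⟨x, rfl⟩
      rw [hd] at this
      rw [Submodule.mem_span_singleton] at this
      obtain ⟨a, ha⟩ := this
      simpa using ha.symm
    have hdvd : ∀ x : Λ, (d.natAbs : ℤ) ∣ ρ x := by
      intro x
      have : ρ x ∈ LinearMap.range ρ := ⟨x, rfl⟩
      rw [hd, Submodule.mem_span_singleton] at this
      obtain ⟨a, ha⟩ := this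
      exact (Int.natAbs_dvd).mpr ⟨a, by simpa [mul_comm] using ha.symm⟩
    set e : ℤ := (d.natAbs : ℤ) with he
    have he0 : 0 < e := by simp [he]; omega
    set w : Λ →ₗ[ℤ] ℤ :=
      { toFun := fun x => ρ x / e
        map_add' := by
          intro x y
          rw [map_add, Int.add_ediv_of_dvd_left (hdvd x)]
        map_smul' := by
          intro c x
          simp only [map_smul, smul_eq_mul, RingHom.id_apply]
          exact Int.mul_ediv_assoc c (hdvd x) } with hwdef
    have hρw : ρ = d.natAbs • w := by
      ext x
      simp only [LinearMap.smul_apply, hwdef, LinearMap.coe_mk, AddHom.coe_mk, smul_eq_mul]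
      rw [nsmul_eq_mul]
      exact (Int.mul_ediv_cancel' (hdvd x)).symm
    have h1 : d.natAbs = 1 := hprim d.natAbs w (by omega) hρw
    have : (1 : ℤ) ∈ LinearMap.range ρ := by
      rw [hd, Submodule.mem_span_singleton]
      have hdvd1 : d ∣ (1 : ℤ) := (Int.isUnit_iff_natAbs_eq.mpr h1).dvd
      obtain ⟨a, ha⟩ := hdvd1
      exact ⟨a, by simpa [mul_comm] using ha.symm⟩
    exact this
  -- E₀ : the generators on which ρ vanishes
  set E₀ : Finset Λ := E.filter (fun μ => ρ μ = 0) with hE₀def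
  have hE₀sub : E₀ ⊆ E := Finset.filter_subset _ _
  have hE₀val : ∀ μ ∈ E₀, ρ μ = 0 := fun μ hμ => (Finset.mem_filter.mp hμ).2
  -- Step 2 (extremality): any integer functional vanishing on E₀ vanishes on ker ρ
  have hkey : ∀ ζ : Λ →ₗ[ℤ] ℤ, (∀ μ ∈ E₀, ζ μ = 0) → ∀ x : Λ, ρ x = 0 → ζ x = 0 := by
    intro ζ hζ0' x hx
    have hζ0 : ∀ μ ∈ E, ρ μ = 0 → ζ μ = 0 := fun μ hμ h0 =>
      hζ0' μ (Finset.mem_filter.mpr ⟨hμ, h0⟩)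
    set ζℚ := (Int.castAddHom ℚ).toIntLinearMap.comp ζ with hζℚdef
    set c : ℕ := E.sup (fun μ => (ζ μ).natAbs) with hc
    have hbound : ∀ μ ∈ E, |ζ μ| ≤ (c : ℤ) := by
      intro μ hμ
      have := Finset.le_sup (f := fun μ => (ζ μ).natAbs) hμ
      rw [Int.abs_eq_natAbs]
      exact_mod_cast this
    have hE' : ∀ μ ∈ E,
        0 ≤ (ζ μ : ℚ) + (c : ℚ) * (ρ μ : ℚ) ∧ 0 ≤ (c : ℚ) * (ρ μ : ℚ) - (ζ μ : ℚ) := by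
      intro μ hμ
      have h1 := hbound μ hμ
      rcases eq_or_lt_of_le (hρΓ μ (hEΓ μ hμ)) with h | h
      · have hz : ζ μ = 0 := hζ0 μ hμ h.symm
        simp [hz, ← h]
      · have h2 : (1 : ℤ) ≤ ρ μ := h
        constructor
        · have : (0 : ℤ) ≤ ζ μ + c * ρ μ := by nlinarith [abs_le.mp h1]
          exact_mod_cast this
        · have : (0 : ℤ) ≤ c * ρ μ - ζ μ := by nlinarith [abs_le.mp h1]
          exact_mod_cast this
    set ξ : Λ →ₗ[ℤ] ℚ := ζℚ + (c : ℚ) • ρℚ with hξdef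
    set η : Λ →ₗ[ℤ] ℚ := (c : ℚ) • ρℚ - ζℚ with hηdef
    have hmemK : ∀ θ : Λ →ₗ[ℤ] ℚ, (∀ μ ∈ E, 0 ≤ θ μ) → ∀ γ ∈ Γ, 0 ≤ θ γ := by
      intro θ hθ γ hγ
      rw [← hEgen] at hγ
      induction hγ using AddSubmonoid.closure_induction with
      | mem μ hμ => exact hθ μ hμ
      | zero => simp
      | add a b ha hb iha ihb => rw [map_add]; positivity
    have hξK : ξ ∈ {ξ : Λ →ₗ[ℤ] ℚ | ∀ γ ∈ Γ, 0 ≤ ξ γ} := by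
      refine hmemK ξ (fun μ hμ => ?_)
      have := (hE' μ hμ).1
      simpa [hξdef, ζℚ, ρℚ] using this
    have hηK : η ∈ {ξ : Λ →ₗ[ℤ] ℚ | ∀ γ ∈ Γ, 0 ≤ ξ γ} := by
      refine hmemK η (fun μ hμ => ?_)
      have := (hE' μ hμ).2
      simpa [hηdef, ζℚ, ρℚ] using this
    have hsum : ξ + η = ((2 * c : ℚ)) • ρℚ := by
      rw [hξdef, hηdef]; ring_nf; module
    obtain ⟨⟨c₁, hc₁0, hc₁⟩, -⟩ :=
      hext.2.2 ξ hξK η hηK ⟨2 * c, by positivity, hsum⟩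
    have := congrArg (fun θ : Λ →ₗ[ℤ] ℚ => θ x) hc₁
    simp only [hξdef, LinearMap.add_apply, LinearMap.smul_apply, smul_eq_mul] at this
    have hx' : (ρ x : ℚ) = 0 := by exact_mod_cast congrArg (Int.cast : ℤ → ℚ) hx
    have : (ζ x : ℚ) = 0 := by
      simpa [ζℚ, ρℚ, hx'] using this
    exact_mod_cast this
  -- Step 3: ker ρ is contained in the saturation of span ℤ E₀
  have hker : ∀ x : Λ, ρ x = 0 →
      ∃ n : ℕ, 0 < n ∧ (n : ℤ) • x ∈ Submodule.span ℤ (E₀ : Set Λ) := by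
    intro x hx
    set L : Submodule ℤ Λ := Submodule.span ℤ (E₀ : Set Λ) with hL
    set Q := (Λ ⧸ L) ⧸ Submodule.torsion ℤ (Λ ⧸ L) with hQ
    set π : Λ →ₗ[ℤ] Q := (Submodule.torsion ℤ (Λ ⧸ L)).mkQ.comp L.mkQ with hπ
    haveI : Module.Free ℤ Q := Module.free_of_finite_type_torsion_free'
    have hπx : π x = 0 := by
      by_contra hne
      set b := Module.Free.chooseBasis ℤ Q with hb
      have : b.repr (π x) ≠ 0 := fun h => hne (by simpa using congrArg b.repr.symm h)
      obtain ⟨i, hi⟩ : ∃ i, b.repr (π x) i ≠ 0 := by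
        by_contra hall
        push_neg at hall
        exact this (Finsupp.ext hall)
      have hζ := hkey ((b.coord i).comp π) ?_ x hx
      · exact hi (by simpa using hζ)
      · intro μ hμ
        have hμL : μ ∈ L := Submodule.subset_span (by exact_mod_cast hμ)
        have : π μ = 0 := by
          simp [hπ, Submodule.Quotient.mk_eq_zero, (Submodule.Quotient.mk_eq_zero L).mpr hμL]
        simp [this]
    have htor : L.mkQ x ∈ Submodule.torsion ℤ (Λ ⧸ L) := by
      have := hπx
      rwa [hπ, LinearMap.comp_apply, Submodule.mkQ_apply, Submodule.Quotient.mk_eq_zero] at this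
    obtain ⟨a, ha⟩ := (Submodule.mem_torsion_iff (R := ℤ) (L.mkQ x)).mp htor
    have ha0 : (a : ℤ) ≠ 0 := nonZeroDivisors.coe_ne_zero a
    refine ⟨(a : ℤ).natAbs, by omega, ?_⟩
    have haL : (a : ℤ) • x ∈ L := by
      have : L.mkQ ((a : ℤ) • x) = 0 := by
        rw [map_smul]
        exact_mod_cast ha
      rwa [Submodule.mkQ_apply, Submodule.Quotient.mk_eq_zero] at this
    rcases Int.natAbs_eq (a : ℤ) with h | h
    · rwa [← h]
    · have heq : ((a : ℤ).natAbs : ℤ) = -(a : ℤ) := by omega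
      rw [heq, neg_smul]
      exact neg_mem haL
  -- Step 4: some generator has positive value
  have hpos : ∃ μ ∈ E, 0 < ρ μ := by
    by_contra h
    push_neg at h
    have hE0 : ∀ μ ∈ E, ρ μ = 0 := fun μ hμ =>
      le_antisymm (h μ hμ) (hρΓ μ (hEΓ μ hμ))
    have hΓ0 : ∀ γ ∈ Γ, ρ γ = 0 := by
      intro γ hγ
      rw [← hEgen] at hγ
      induction hγ using AddSubmonoid.closure_induction with
      | mem μ hμ => exact hE0 μ hμ
      | zero => simp
      | add a b ha hb iha ihb => rw [map_add, iha, ihb, add_zero]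
    apply hρ0
    ext x
    have hx : x ∈ AddSubgroup.closure (Γ : Set Λ) := by rw [hZΓ]; trivial
    simp only [LinearMap.zero_apply]
    induction hx using AddSubgroup.closure_induction with
    | mem γ hγ => exact hΓ0 γ hγ
    | zero => simp
    | add a b ha hb iha ihb => rw [map_add, iha, ihb, add_zero]
    | neg a ha iha => rw [map_neg, iha, neg_zero]
  -- Step 5: there is w ∈ Γ with ρ w = 1
  have hwex : ∃ w ∈ Γ, ρ w = 1 := by
    obtain ⟨v, hv1⟩ := hv
    obtain ⟨μ', hμ'E, hp⟩ := hpos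
    set p : ℤ := ρ μ' with hpdef
    set x : Λ := p • v - μ' with hxdef
    have hρx : ρ x = 0 := by
      simp [hxdef, map_sub, map_smul, hv1, hpdef, smul_eq_mul]
    obtain ⟨n, hn, hmem⟩ := hker x hρx
    rw [Submodule.mem_span_finset] at hmem
    obtain ⟨a, -, ha⟩ := hmem
    set N : ℕ := E₀.sup (fun μ => (a μ).natAbs) with hN
    set m : ℕ := n * p.toNat with hm
    have hm0 : 0 < m := by
      have : 0 < p.toNat := by omega
      positivity
    have hmℤ : (m : ℤ) = n * p := by
      simp [hm]
      omega
    set γ : Λ := ∑ μ ∈ E₀, μ with hγ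
    set w : Λ := v + (N : ℤ) • γ with hw
    have hργ : ρ γ = 0 := by
      rw [hγ, map_sum]
      exact Finset.sum_eq_zero hE₀val
    have hρw : ρ w = 1 := by
      simp [hw, map_add, map_smul, hργ, hv1]
    have ha' : (m : ℤ) • v - (n : ℤ) • μ' = ∑ μ ∈ E₀, a μ • μ := by
      rw [ha, hxdef, smul_sub, smul_smul, ← hmℤ]
    have hid : (m : ℤ) • w = (n : ℤ) • μ' + ∑ μ ∈ E₀, (a μ + (m : ℤ) * (N : ℤ)) • μ := by
      have hsum : ∑ μ ∈ E₀, (a μ + (m : ℤ) * (N : ℤ)) • μ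
          = (∑ μ ∈ E₀, a μ • μ) + ((m : ℤ) * (N : ℤ)) • γ := by
        rw [hγ, Finset.smul_sum, ← Finset.sum_add_distrib]
        exact Finset.sum_congr rfl fun μ _ => (add_smul _ _ _)
      rw [hsum, ← ha', hw]
      rw [smul_add, smul_smul]
      abel
    have hcoef : ∀ μ ∈ E₀, 0 ≤ a μ + (m : ℤ) * (N : ℤ) := by
      intro μ hμ
      have h1 : (a μ).natAbs ≤ N := Finset.le_sup (f := fun μ => (a μ).natAbs) hμ
      have h2 : (1 : ℤ) ≤ (m : ℤ) := by exact_mod_cast hm0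
      have h3 : (N : ℤ) ≤ (m : ℤ) * (N : ℤ) := le_mul_of_one_le_left (by positivity) h2
      omega
    have hmw : (m : ℤ) • w ∈ Γ := by
      rw [hid]
      refine AddSubmonoid.add_mem _ ?_ (AddSubmonoid.sum_mem _ fun μ hμ => ?_)
      · rw [natCast_zsmul]
        exact AddSubmonoid.nsmul_mem _ (hEΓ μ' hμ'E) n
      · set k : ℤ := a μ + (m : ℤ) * (N : ℤ) with hk
        have hk0 : 0 ≤ k := hcoef μ hμ
        have : k • μ = k.toNat • μ := by
          rw [← natCast_zsmul]
          congr 1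
          omega
        rw [this]
        exact AddSubmonoid.nsmul_mem _ (hEΓ μ (hE₀sub hμ)) _
    refine ⟨w, hsat w ⟨m, hm0, ?_⟩, hρw⟩
    rwa [natCast_zsmul] at hmw
  -- Step 6: conclude
  obtain ⟨w, hwΓ, hw1⟩ := hwex
  have hstep : ∀ z ∈ Γ, 0 ≤ ρ z ∧ (ρ z = 1 → ∃ μ ∈ E, ρ μ = 1) := by
    intro z hz
    rw [← hEgen] at hz
    induction hz using AddSubmonoid.closure_induction with
    | mem μ hμ =>
      refine ⟨hρΓ μ (hEΓ μ hμ), fun h1 => ⟨μ, hμ, h1⟩⟩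
    | zero => simp
    | add a b ha hb iha ihb =>
      have ha0 := iha.1
      have hb0 := ihb.1
      refine ⟨by rw [map_add]; positivity, fun h1 => ?_⟩
      rw [map_add] at h1
      rcases (by omega : ρ a = 1 ∨ ρ b = 1) with h | h
      · exact iha.2 h
      · exact ihb.2 h
  exact (hstep w hwΓ).2 hw1
end

section
/- Let V be a finite-dimensional ℚ-vector space with a positive-definite symmetric bilinear form (·,·) and let Π ⊆ V be a finite linearly independent set with (α, β) ≤ 0 for all distinct α, β ∈ Π. Let Γ ⊆ V be a finitely generated submonoid such that ⟨δ^∨, λ⟩ ≥ 0 for all δ ∈ Π and all λ ∈ Γ, set Λ = ℤΓ (a finitely generated free abelian group), and assume Γ is saturated. If σ ∈ Λ is a nonzero ℕ-linear combination of elements of Π, then there exists an extremal ray generator ρ of the dual cone K with ρ(σ) > 0. -/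
/-- The convex cone `ℚ≥0Γ` generated by a submonoid `Γ` of a `ℚ`-vector space `V`:
all finite nonnegative rational combinations of elements of `Γ`. -/
def qCone {V : Type*} [AddCommGroup V] [Module ℚ V] (Γ : AddSubmonoid V) : Set V :=
  {v | ∃ (s : Finset V) (c : V → ℚ), (∀ x ∈ s, x ∈ Γ ∧ 0 ≤ c x) ∧ v = ∑ x ∈ s, c x • x}

section Abstract

variable {W : Type*} [AddCommGroup W] [Module ℚ W] {A : Type*}

/-- The "coordinate" dual cone. -/
def Kc (T : Finset A) (a : A → W →ₗ[ℚ] ℚ) : Set W := {η | ∀ g ∈ T, 0 ≤ a g η}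

lemma extgen_smul (T : Finset A) (a : A → W →ₗ[ℚ] ℚ) {ρ : W}
    (h : IsExtremalRayGen (Kc T a) ρ) {c : ℚ} (hc : 0 < c) :
    IsExtremalRayGen (Kc T a) (c • ρ) := by
  obtain ⟨hK, h0, hext⟩ := h
  refine ⟨fun g hg => ?_, smul_ne_zero (ne_of_gt hc) h0, ?_⟩
  · rw [map_smul, smul_eq_mul]
    exact mul_nonneg hc.le (hK g hg)
  · rintro x hx y hy ⟨e, he, hxy⟩
    obtain ⟨⟨cx, hcx, hx'⟩, ⟨cy, hcy, hy'⟩⟩ := hext x hx y hy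
      ⟨e * c, mul_nonneg he hc.le, by rw [hxy, smul_smul]⟩
    refine ⟨⟨cx / c, div_nonneg hcx hc.le, ?_⟩, ⟨cy / c, div_nonneg hcy hc.le, ?_⟩⟩
    · rw [hx', smul_smul, div_mul_cancel₀ _ (ne_of_gt hc)]
    · rw [hy', smul_smul, div_mul_cancel₀ _ (ne_of_gt hc)]

/-- Boundary-hitting lemma: moving from `ξ ∈ K` in direction `d` (vanishing on the
zero set of `ξ`, negative somewhere) until a new constraint becomes tight. -/
lemma split (T : Finset A) (a : A → W →ₗ[ℚ] ℚ) {ξ d : W}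
    (hξK : ∀ g ∈ T, 0 ≤ a g ξ)
    (hZ : ∀ g ∈ T, a g ξ = 0 → a g d = 0)
    (hP : ∃ g ∈ T, a g d < 0) :
    ∃ s : ℚ, 0 < s ∧ (∀ g ∈ T, 0 ≤ a g (ξ + s • d)) ∧
      (∀ g ∈ T, a g (ξ + s • d) ≠ 0 → a g ξ ≠ 0) ∧
      ∃ g' ∈ T, a g' ξ ≠ 0 ∧ a g' (ξ + s • d) = 0 := by
  classical
  set P : Finset A := T.filter (fun g => a g d < 0) with hPdef
  have hPne : P.Nonempty := by
    obtain ⟨g, hgT, hgd⟩ := hP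
    exact ⟨g, by simp [hPdef, hgT, hgd]⟩
  have hPpos : ∀ g ∈ P, 0 < a g ξ ∧ a g d < 0 := by
    intro g hg
    rw [hPdef, Finset.mem_filter] at hg
    refine ⟨lt_of_le_of_ne (hξK g hg.1) ?_, hg.2⟩
    intro h
    exact absurd (hZ g hg.1 h.symm) (ne_of_lt hg.2)
  set R : Finset ℚ := P.image (fun g => a g ξ / (-(a g d))) with hRdef
  have hRne : R.Nonempty := hPne.image _
  set s : ℚ := R.min' hRne with hsdef
  obtain ⟨g', hg'P, hg's⟩ : ∃ g' ∈ P, a g' ξ / (-(a g' d)) = s := by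
    exact Finset.mem_image.mp (R.min'_mem hRne)
  have hg'pos := hPpos g' hg'P
  have hspos : 0 < s := by
    rw [← hg's]
    exact div_pos hg'pos.1 (by linarith [hg'pos.2])
  have heval : ∀ g, a g (ξ + s • d) = a g ξ + s * a g d := by
    intro g; rw [map_add, map_smul, smul_eq_mul]
  have hsle : ∀ g ∈ P, s * (-(a g d)) ≤ a g ξ := by
    intro g hg
    have hmem : a g ξ / (-(a g d)) ∈ R := Finset.mem_image_of_mem _ hg
    have hle : s ≤ a g ξ / (-(a g d)) := R.min'_le _ hmem
    have hd : 0 < -(a g d) := by linarith [(hPpos g hg).2]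
    calc s * (-(a g d)) ≤ (a g ξ / (-(a g d))) * (-(a g d)) := by
          exact mul_le_mul_of_nonneg_right hle hd.le
      _ = a g ξ := div_mul_cancel₀ _ (ne_of_gt hd)
  refine ⟨s, hspos, ?_, ?_, g', (Finset.mem_filter.mp hg'P).1, ne_of_gt hg'pos.1, ?_⟩
  · intro g hgT
    rw [heval]
    rcases le_or_gt 0 (a g d) with h | h
    · have := hξK g hgT
      nlinarith
    · have hgP : g ∈ P := by simp [hPdef, hgT, h]
      have := hsle g hgP
      nlinarith
  · intro g hgT hne
    by_contra h0
    rw [heval, h0, hZ g hgT h0, mul_zero, add_zero] at hne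
    exact hne rfl
  · rw [heval, ← hg's]
    have hd : (-(a g' d)) ≠ 0 := by linarith [hg'pos.2]
    field_simp
    rw [div_self (ne_of_lt hg'pos.2)]
    ring

end Abstract

section Mink
variable {W : Type*} [AddCommGroup W] [Module ℚ W] {A : Type*} [DecidableEq A]
variable (T : Finset A) (a : A → W →ₗ[ℚ] ℚ)

/-- Sum-of-extremal-generators predicate via lists. -/
def SumExt (ξ : W) : Prop :=
  ∃ l : List W, (∀ ρ ∈ l, IsExtremalRayGen (Kc T a) ρ) ∧ ξ = l.sum

lemma sumExt_zero : SumExt T a (0 : W) := ⟨[], by simp, by simp⟩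

lemma sumExt_smul {ξ : W} {c : ℚ} (hc : 0 ≤ c) (h : SumExt T a ξ) : SumExt T a (c • ξ) := by
  rcases eq_or_lt_of_le hc with h0 | h0
  · rw [← h0, zero_smul]; exact sumExt_zero T a
  · obtain ⟨l, hl, hsum⟩ := h
    refine ⟨l.map (c • ·), ?_, ?_⟩
    · intro ρ hρ
      obtain ⟨ρ', hρ', rfl⟩ := List.mem_map.mp hρ
      exact extgen_smul T a (hl ρ' hρ') h0
    · rw [hsum, List.smul_sum]

lemma sumExt_add {ξ η : W} (hξ : SumExt T a ξ) (hη : SumExt T a η) : SumExt T a (ξ + η) := by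
  obtain ⟨l1, hl1, h1⟩ := hξ
  obtain ⟨l2, hl2, h2⟩ := hη
  refine ⟨l1 ++ l2, ?_, by rw [h1, h2, List.sum_append]⟩
  intro ρ hρ
  rcases List.mem_append.mp hρ with h | h
  · exact hl1 ρ h
  · exact hl2 ρ h

lemma minkowski (hpt : ∀ ξ : W, (∀ g ∈ T, a g ξ = 0) → ξ = 0) :
    ∀ n (ξ : W), (∀ g ∈ T, 0 ≤ a g ξ) →
      (T.filter (fun g => a g ξ ≠ 0)).card ≤ n → SumExt T a ξ := by
  intro n
  induction n with
  | zero =>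
    intro ξ hξK hcard
    have : ξ = 0 := by
      apply hpt
      intro g hg
      by_contra hne
      have : g ∈ T.filter (fun g => a g ξ ≠ 0) := Finset.mem_filter.mpr ⟨hg, hne⟩
      have := Finset.card_pos.mpr ⟨g, this⟩
      omega
    rw [this]; exact sumExt_zero T a
  | succ n IH =>
    intro ξ hξK hcard
    by_cases hξ0 : ξ = 0
    · rw [hξ0]; exact sumExt_zero T a
    -- nonzero positive coordinate exists
    have hpos : ∃ g ∈ T, 0 < a g ξ := by
      by_contra h
      push_neg at h
      exact hξ0 (hpt ξ fun g hg => le_antisymm (h g hg) (hξK g hg))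
    by_cases hext : ∀ d : W, (∀ g ∈ T, a g ξ = 0 → a g d = 0) → ∃ q : ℚ, d = q • ξ
    · -- ξ is extremal
      refine ⟨[ξ], ?_, by simp⟩
      intro ρ hρ
      rw [List.mem_singleton] at hρ
      rw [hρ]
      refine ⟨hξK, hξ0, ?_⟩
      rintro x hx y hy ⟨c, hc, hxy⟩
      have hz : ∀ g ∈ T, a g ξ = 0 → a g x = 0 ∧ a g y = 0 := by
        intro g hg h0
        have hxg := hx g hg
        have hyg := hy g hg
        have : a g x + a g y = 0 := by
          rw [← map_add, hxy, map_smul, smul_eq_mul, h0, mul_zero]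
        constructor <;> linarith
      obtain ⟨g0, hg0T, hg0⟩ := hpos
      have hsign : ∀ z : W, z ∈ Kc T a → (∀ g ∈ T, a g ξ = 0 → a g z = 0) →
          ∃ e : ℚ, 0 ≤ e ∧ z = e • ξ := by
        intro z hz hzz
        obtain ⟨q, hq⟩ := hext z hzz
        refine ⟨q, ?_, hq⟩
        have := hz g0 hg0T
        rw [hq, map_smul, smul_eq_mul] at this
        nlinarith
      exact ⟨hsign x hx (fun g hg h0 => (hz g hg h0).1),
             hsign y hy (fun g hg h0 => (hz g hg h0).2)⟩
    · -- not extremal: find a direction and split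
      push_neg at hext
      obtain ⟨d0, hZ0, hq0⟩ := hext
      -- orient d so that some constraint decreases
      have horient : ∃ d1 : W, (∀ g ∈ T, a g ξ = 0 → a g d1 = 0) ∧
          (∀ q : ℚ, d1 ≠ q • ξ) ∧ (∃ g ∈ T, a g d1 < 0) := by
        by_cases hd : ∃ g ∈ T, a g d0 < 0
        · exact ⟨d0, hZ0, hq0, hd⟩
        · push_neg at hd
          refine ⟨-d0, fun g hg h0 => by rw [map_neg, hZ0 g hg h0, neg_zero], ?_, ?_⟩
          · intro q h
            exact hq0 (-q) (by rw [neg_smul, ← h, neg_neg])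
          · by_contra h
            push_neg at h
            refine hq0 0 ?_
            rw [zero_smul]
            apply hpt
            intro g hg
            have h1 := hd g hg
            have h2 := h g hg
            rw [map_neg] at h2
            linarith
      obtain ⟨d1, hZ1, hq1, hP1⟩ := horient
      -- helper for the cardinality decrease
      have hdec : ∀ η : W, (∀ g ∈ T, a g η ≠ 0 → a g ξ ≠ 0) →
          (∃ g' ∈ T, a g' ξ ≠ 0 ∧ a g' η = 0) →
          (T.filter (fun g => a g η ≠ 0)).card ≤ n := by
        intro η hsub ⟨g', hg'T, hg'ξ, hg'η⟩
        have hss : T.filter (fun g => a g η ≠ 0) ⊂ T.filter (fun g => a g ξ ≠ 0) := by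
          constructor
          · intro g hg
            rw [Finset.mem_filter] at hg ⊢
            exact ⟨hg.1, hsub g hg.1 hg.2⟩
          · intro hsup
            have : g' ∈ T.filter (fun g => a g η ≠ 0) :=
              hsup (Finset.mem_filter.mpr ⟨hg'T, hg'ξ⟩)
            exact (Finset.mem_filter.mp this).2 hg'η
        have := Finset.card_lt_card hss
        omega
      obtain ⟨s, hs, hξ1K, hξ1sub, g1, hg1T, hg1ξ, hg1z⟩ := split T a hξK hZ1 hP1
      have hSE1 : SumExt T a (ξ + s • d1) := IH _ hξ1K (hdec _ hξ1sub ⟨g1, hg1T, hg1ξ, hg1z⟩)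
      by_cases hQ : ∃ g ∈ T, 0 < a g d1
      · -- both directions hit the boundary
        have hP2 : ∃ g ∈ T, a g (-d1) < 0 := by
          obtain ⟨g, hg, h⟩ := hQ
          exact ⟨g, hg, by rw [map_neg]; linarith⟩
        have hZ2 : ∀ g ∈ T, a g ξ = 0 → a g (-d1) = 0 := by
          intro g hg h0; rw [map_neg, hZ1 g hg h0, neg_zero]
        obtain ⟨t, ht, hξ2K, hξ2sub, g2, hg2T, hg2ξ, hg2z⟩ := split T a hξK hZ2 hP2
        have hSE2 : SumExt T a (ξ + t • (-d1)) :=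
          IH _ hξ2K (hdec _ hξ2sub ⟨g2, hg2T, hg2ξ, hg2z⟩)
        have hst : (0:ℚ) < s + t := by positivity
        have key2 : (s + t) • ξ = t • (ξ + s • d1) + s • (ξ + t • (-d1)) := by module
        have key : ξ = ((s + t)⁻¹ * t) • (ξ + s • d1) + ((s + t)⁻¹ * s) • (ξ + t • (-d1)) := by
          match_scalars
          · field_simp
            ring
          · field_simp
            ring
        rw [key]
        exact sumExt_add T a (sumExt_smul T a (by positivity) hSE1)
          (sumExt_smul T a (by positivity) hSE2)
      · -- -d1 lies in the cone
        push_neg at hQ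
        set e := -d1 with hedef
        have heK : ∀ g ∈ T, 0 ≤ a g e := by
          intro g hg; rw [hedef, map_neg]; linarith [hQ g hg]
        have hesub : ∀ g ∈ T, a g e ≠ 0 → a g ξ ≠ 0 := by
          intro g hg hne h0
          rw [hedef, map_neg, hZ1 g hg h0, neg_zero] at hne
          exact hne rfl
        have hkey : ξ = (ξ + s • d1) + s • e := by
          rw [hedef]; module
        by_cases hstrict : ∃ g ∈ T, a g ξ ≠ 0 ∧ a g e = 0
        · have hSEe : SumExt T a e := IH _ heK (hdec _ hesub hstrict)
          rw [hkey]
          exact sumExt_add T a hSE1 (sumExt_smul T a hs.le hSEe)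
        · -- all positive coordinates of ξ are positive on e: peel off a multiple of ξ from e
          push_neg at hstrict
          have hPw : ∃ g ∈ T, a g (-ξ) < 0 := by
            obtain ⟨g, hg, h⟩ := hpos
            exact ⟨g, hg, by rw [map_neg]; linarith⟩
          have hZw : ∀ g ∈ T, a g e = 0 → a g (-ξ) = 0 := by
            intro g hg h0
            rw [map_neg, neg_eq_zero]
            by_contra hne
            exact hstrict g hg hne h0
          obtain ⟨μ, hμ, hwK, hwsub, g3, hg3T, hg3e, hg3z⟩ := split T a heK hZw hPw
          set w := e + μ • (-ξ) with hwdef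
          have hwsubξ : ∀ g ∈ T, a g w ≠ 0 → a g ξ ≠ 0 :=
            fun g hg hne => hesub g hg (hwsub g hg hne)
          have hg3ξ : a g3 ξ ≠ 0 := hesub g3 hg3T hg3e
          have hSEw : SumExt T a w := IH _ hwK (hdec _ hwsubξ ⟨g3, hg3T, hg3ξ, hg3z⟩)
          have hw0 : w ≠ 0 := by
            intro h
            apply hq1 (-μ)
            have : e = μ • ξ := by
              have := h
              rw [hwdef] at this
              rw [← sub_eq_zero]
              rw [smul_neg] at this
              rw [sub_eq_add_neg, ← smul_neg]
              rw [hwdef] at h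
              linear_combination (norm := module) h
            rw [hedef] at this
            rw [neg_smul, ← neg_eq_iff_eq_neg.mpr this.symm]
          -- split ξ in direction -w
          have hPξw : ∃ g ∈ T, a g (-w) < 0 := by
            by_contra h
            push_neg at h
            apply hw0
            apply hpt
            intro g hg
            have h1 := h g hg
            rw [map_neg] at h1
            have h2 := hwK g hg
            linarith
          have hZξw : ∀ g ∈ T, a g ξ = 0 → a g (-w) = 0 := by
            intro g hg h0
            have hd : a g d1 = 0 := hZ1 g hg h0
            have he0 : a g e = 0 := by rw [hedef, map_neg, hd, neg_zero]
            have hw : a g w = a g e + μ * a g (-ξ) := by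
              rw [hwdef, map_add, map_smul, smul_eq_mul]
            rw [map_neg, hw, he0, map_neg, h0, neg_zero, mul_zero, add_zero, neg_zero]
          obtain ⟨s', hs', hηK, hηsub, g4, hg4T, hg4ξ, hg4z⟩ := split T a hξK hZξw hPξw
          have hSEη : SumExt T a (ξ + s' • (-w)) :=
            IH _ hηK (hdec _ hηsub ⟨g4, hg4T, hg4ξ, hg4z⟩)
          have hkey2 : ξ = (ξ + s' • (-w)) + s' • w := by module
          rw [hkey2]
          exact sumExt_add T a hSEη (sumExt_smul T a hs'.le hSEw)

end Mink

lemma list_sum_nonpos : ∀ (l : List ℚ), (∀ x ∈ l, x ≤ 0) → l.sum ≤ 0 := by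
  intro l
  induction l with
  | nil => simp
  | cons a t ih =>
    intro hc
    simp only [List.sum_cons]
    have h1 := hc a (by simp)
    have h2 := ih (fun x hx => hc x (by simp [hx]))
    linarith

lemma list_exists_pos {l : List ℚ} (h : 0 < l.sum) : ∃ x ∈ l, 0 < x := by
  by_contra hc
  push_neg at hc
  linarith [list_sum_nonpos l hc]


/-- Let `V` be a finite-dimensional `ℚ`-vector space with a positive-definite
symmetric bilinear form `B`, `S ⊆ V` finite, linearly independent, with pairwise non-acute
angles (simple roots).  Let `Γ ⊆ V` be a finitely generated submonoid with
`⟨δ^∨, λ⟩ = 2 B δ λ / B δ δ ≥ 0` for all `δ ∈ S`, `λ ∈ Γ` (dominance), let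
`Λ = ℤΓ = AddSubgroup.closure Γ`, and assume `Γ` is saturated (`Γ = Λ ∩ ℚ≥0Γ`).
If `σ ∈ Λ` is a nonzero `ℕ`-linear combination of elements of `S`, then there exists an
extremal ray generator `ρ` of the dual cone `K = {ξ ∈ Hom_ℤ(Λ, ℚ) : ξ ≥ 0 on Γ}`
with `ρ(σ) > 0`. -/
theorem exists_extremal_ray_positive_on_sigma
    {V : Type*} [AddCommGroup V] [Module ℚ V] [FiniteDimensional ℚ V]
    (B : V →ₗ[ℚ] V →ₗ[ℚ] ℚ)
    (hsymm : ∀ x y : V, B x y = B y x)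
    (hposdef : ∀ v : V, v ≠ 0 → 0 < B v v)
    (S : Finset V)
    (hli : LinearIndependent ℚ (fun x : (S : Set V) => (x : V)))
    (hobtuse : ∀ α ∈ S, ∀ β ∈ S, α ≠ β → B α β ≤ 0)
    (Γ : AddSubmonoid V) (hΓfg : Γ.FG)
    (hdom : ∀ δ ∈ S, ∀ lam ∈ Γ, 0 ≤ 2 * B δ lam / B δ δ)
    (hsat : ∀ v ∈ AddSubgroup.closure (Γ : Set V), v ∈ qCone Γ → v ∈ Γ)
    (σ : V) (k : V → ℕ)
    (hσ : σ = ∑ α ∈ S, (k α : ℚ) • α)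
    (hσ0 : σ ≠ 0)
    (hσΛ : σ ∈ AddSubgroup.closure (Γ : Set V)) :
    ∃ ρ : ↥(AddSubgroup.closure (Γ : Set V)) →ₗ[ℤ] ℚ,
      IsExtremalRayGen
        {ξ : ↥(AddSubgroup.closure (Γ : Set V)) →ₗ[ℤ] ℚ |
          ∀ γ : ↥(AddSubgroup.closure (Γ : Set V)), (γ : V) ∈ Γ → 0 ≤ ξ γ} ρ ∧
      0 < ρ ⟨σ, hσΛ⟩ := by
  classical
  obtain ⟨Sgen, hSgen⟩ := hΓfg
  have hΓsub : ∀ x ∈ Γ, x ∈ AddSubgroup.closure (Γ : Set V) :=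
    fun x hx => AddSubgroup.subset_closure hx
  have hgenΓ : ∀ x ∈ Sgen, x ∈ Γ := fun x hx => hSgen ▸ AddSubmonoid.subset_closure hx
  set Lam := AddSubgroup.closure (Γ : Set V) with hLam
  let T : Finset ↥Lam :=
    Sgen.attach.image (fun x => (⟨x.1, hΓsub _ (hgenΓ _ x.2)⟩ : ↥Lam))
  have hTΓ : ∀ g ∈ T, (g : V) ∈ Γ := by
    intro g hg
    obtain ⟨x, _, rfl⟩ := Finset.mem_image.mp hg
    exact hgenΓ _ x.2
  let a : ↥Lam → ((↥Lam →ₗ[ℤ] ℚ) →ₗ[ℚ] ℚ) := fun g =>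
    { toFun := fun ξ => ξ g
      map_add' := fun _ _ => rfl
      map_smul' := fun _ _ => rfl }
  -- nonnegativity on T propagates to all of Γ
  have hΓnonneg : ∀ ξ : ↥Lam →ₗ[ℤ] ℚ, (∀ g ∈ T, 0 ≤ ξ g) →
      ∀ v, v ∈ Γ → ∀ (h : v ∈ Lam), 0 ≤ ξ ⟨v, h⟩ := by
    intro ξ hξ v hv
    rw [← hSgen] at hv
    refine AddSubmonoid.closure_induction
      (motive := fun x _ => ∀ (h : x ∈ Lam), 0 ≤ ξ ⟨x, h⟩) ?_ ?_ ?_ hv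
    · intro x hx h
      refine hξ _ (Finset.mem_image.mpr ⟨⟨x, hx⟩, Finset.mem_attach _ _, ?_⟩)
      exact Subtype.ext rfl
    · intro h
      have h0 : (⟨(0 : V), h⟩ : ↥Lam) = 0 := Subtype.ext rfl
      rw [h0, map_zero]
    · intro x y hx hy px py h
      have hxΛ : x ∈ Lam := hΓsub x (hSgen ▸ hx)
      have hyΛ : y ∈ Lam := hΓsub y (hSgen ▸ hy)
      have hxy : (⟨x + y, h⟩ : ↥Lam) = ⟨x, hxΛ⟩ + ⟨y, hyΛ⟩ := Subtype.ext rfl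
      rw [hxy, map_add]
      exact add_nonneg (px hxΛ) (py hyΛ)
  -- pointedness
  have hpt : ∀ ξ : ↥Lam →ₗ[ℤ] ℚ, (∀ g ∈ T, a g ξ = 0) → ξ = 0 := by
    intro ξ h
    have hzΓ : ∀ v, v ∈ Γ → ∀ (h' : v ∈ Lam), ξ ⟨v, h'⟩ = 0 := by
      intro v hv h'
      have h1 : 0 ≤ ξ ⟨v, h'⟩ := hΓnonneg ξ (fun g hg => le_of_eq (h g hg).symm) v hv h'
      have h2 : 0 ≤ (-ξ) ⟨v, h'⟩ := by
        refine hΓnonneg (-ξ) (fun g hg => ?_) v hv h'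
        have := h g hg
        show 0 ≤ -(ξ g)
        simp only [show a g ξ = ξ g from rfl] at this
        rw [this, neg_zero]
      rw [LinearMap.neg_apply] at h2
      linarith
    ext m
    have hm : (m : V) ∈ Lam := m.2
    have : ∀ v, v ∈ Lam → ∀ (h' : v ∈ Lam), ξ ⟨v, h'⟩ = 0 := by
      intro v hv
      refine AddSubgroup.closure_induction
        (p := fun x _ => ∀ (h' : x ∈ Lam), ξ ⟨x, h'⟩ = 0) ?_ ?_ ?_ ?_ hv
      · intro x hx h'
        exact hzΓ x hx h'
      · intro h'
        have h0 : (⟨(0 : V), h'⟩ : ↥Lam) = 0 := Subtype.ext rfl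
        rw [h0, map_zero]
      · intro x y hx hy px py h'
        have hxy : (⟨x + y, h'⟩ : ↥Lam) = ⟨x, hx⟩ + ⟨y, hy⟩ := Subtype.ext rfl
        rw [hxy, map_add, px hx, py hy, add_zero]
      · intro x hx px h'
        have hxy : (⟨-x, h'⟩ : ↥Lam) = -⟨x, hx⟩ := Subtype.ext rfl
        rw [hxy, map_neg, px hx, neg_zero]
    have := this (m : V) hm m.2
    simpa using this
  -- the dual cone in the statement equals the coordinate cone
  have hKeq : {ξ : ↥Lam →ₗ[ℤ] ℚ | ∀ γ : ↥Lam, (γ : V) ∈ Γ → 0 ≤ ξ γ} = Kc T a := by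
    ext ξ
    constructor
    · intro h g hg
      exact h g (hTΓ g hg)
    · intro h γ hγ
      have := hΓnonneg ξ h (γ : V) hγ γ.2
      simpa using this
  -- the functional ξ₀ = B σ restricted to Lam
  let ξ₀ : ↥Lam →ₗ[ℤ] ℚ :=
    ((B σ).toAddMonoidHom.toIntLinearMap).comp (Lam.subtype.toIntLinearMap)
  have hξ₀app : ∀ m : ↥Lam, ξ₀ m = B σ (m : V) := fun _ => rfl
  have hBnn : ∀ α ∈ S, ∀ v ∈ Γ, 0 ≤ B α v := by
    intro α hα v hv
    rcases eq_or_ne α 0 with rfl | h0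
    · simp
    · have hp := hposdef α h0
      have hd := hdom α hα v hv
      by_contra hneg
      push_neg at hneg
      have : 2 * B α v / B α α < 0 := div_neg_of_neg_of_pos (by linarith) hp
      linarith
  have hξ₀T : ∀ g ∈ T, 0 ≤ a g ξ₀ := by
    intro g hg
    show 0 ≤ ξ₀ g
    rw [hξ₀app, hσ]
    have : B (∑ α ∈ S, (k α : ℚ) • α) (g : V) = ∑ α ∈ S, (k α : ℚ) * B α (g : V) := by
      rw [map_sum, LinearMap.sum_apply]
      exact Finset.sum_congr rfl fun α _ => by rw [map_smul, LinearMap.smul_apply, smul_eq_mul]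
    rw [this]
    exact Finset.sum_nonneg fun α hα =>
      mul_nonneg (Nat.cast_nonneg _) (hBnn α hα _ (hTΓ g hg))
  -- decompose ξ₀ into extremal generators
  obtain ⟨l, hl, hsum⟩ := minkowski T a hpt
    ((T.filter (fun g => a g ξ₀ ≠ 0)).card) ξ₀ hξ₀T le_rfl
  have hσhat : ξ₀ ⟨σ, hσΛ⟩ = B σ σ := rfl
  have hevalsum : ξ₀ ⟨σ, hσΛ⟩ = (l.map (fun ρ => ρ ⟨σ, hσΛ⟩)).sum := by
    rw [hsum]
    exact map_list_sum (a ⟨σ, hσΛ⟩) l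
  have hpossum : 0 < (l.map (fun ρ => ρ ⟨σ, hσΛ⟩)).sum := by
    rw [← hevalsum, hσhat]
    exact hposdef σ hσ0
  obtain ⟨x, hxmem, hxpos⟩ := list_exists_pos hpossum
  obtain ⟨ρ, hρl, hρx⟩ := List.mem_map.mp hxmem
  refine ⟨ρ, ?_, by rw [hρx]; exact hxpos⟩
  rw [hKeq]
  exact hl ρ hρl
end

section
/- Let Δ be a finite reduced crystallographic root system in a finite-dimensional real inner product space, with base Π and positive roots Δ⁺. Let σ be an ℕ-linear combination of elements of Π such that σ ∉ Δ⁺ and σ is not of the form α + β for two orthogonal simple roots α, β ∈ Π. Then there exists at most one β ∈ Π with σ − β ∈ Δ⁺. -/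
section Aux
variable {V : Type*} [NormedAddCommGroup V] [InnerProductSpace ℝ V]

lemma aux_inner_self_pos {x : V} (hx : x ≠ 0) : (0:ℝ) < inner ℝ x x :=
  lt_of_le_of_ne real_inner_self_nonneg
    (fun h => hx (inner_self_eq_zero.mp h.symm))

lemma aux_neg_mem (Δ : Finset V) (hzero : (0 : V) ∉ Δ)
    (hrefl : ∀ α ∈ Δ, ∀ β ∈ Δ, β - (2 * (inner ℝ α β : ℝ) / (inner ℝ α α : ℝ)) • α ∈ Δ) :
    ∀ α ∈ Δ, -α ∈ Δ := by
  intro α hα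
  have hα0 : α ≠ 0 := fun h => hzero (h ▸ hα)
  have hA : (0:ℝ) < inner ℝ α α := aux_inner_self_pos hα0
  have h := hrefl α hα α hα
  have h2 : (2 * (inner ℝ α α : ℝ) / (inner ℝ α α : ℝ)) = 2 := by
    field_simp
  rw [h2] at h
  have : α - (2:ℝ) • α = -α := by
    rw [two_smul]; abel
  rwa [this] at h

/-- Key lemma: if `α, β` are distinct roots with positive inner ℝ product,
then `α - β` is a root. -/
lemma aux_sub_mem (Δ : Finset V) (hzero : (0 : V) ∉ Δ)
    (hrefl : ∀ α ∈ Δ, ∀ β ∈ Δ, β - (2 * (inner ℝ α β : ℝ) / (inner ℝ α α : ℝ)) • α ∈ Δ)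
    (hcrys : ∀ α ∈ Δ, ∀ β ∈ Δ, ∃ n : ℤ, 2 * (inner ℝ α β : ℝ) / (inner ℝ α α : ℝ) = (n : ℝ)) :
    ∀ α ∈ Δ, ∀ β ∈ Δ, α ≠ β → (0:ℝ) < inner ℝ α β → α - β ∈ Δ := by
  intro α hα β hβ hne hpos
  have hα0 : α ≠ 0 := fun h => hzero (h ▸ hα)
  have hβ0 : β ≠ 0 := fun h => hzero (h ▸ hβ)
  have hA : (0:ℝ) < inner ℝ α α := aux_inner_self_pos hα0
  have hB : (0:ℝ) < inner ℝ β β := aux_inner_self_pos hβ0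
  obtain ⟨m, hm⟩ := hcrys α hα β hβ
  obtain ⟨n, hn⟩ := hcrys β hβ α hα
  have hba : (inner ℝ β α : ℝ) = inner ℝ α β := real_inner_comm α β
  have hmpos : 0 < m := by
    have : (0:ℝ) < (m:ℝ) := by
      rw [← hm]; positivity
    exact_mod_cast this
  have hnpos : 0 < n := by
    have : (0:ℝ) < (n:ℝ) := by
      rw [← hn, hba]; positivity
    exact_mod_cast this
  have hcs : (inner ℝ α β : ℝ) * inner ℝ α β ≤ (inner ℝ α α : ℝ) * inner ℝ β β :=
    real_inner_mul_inner_self_le α β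
  have hmn : (m:ℝ) * n ≤ 4 := by
    rw [← hm, ← hn, hba]
    rw [div_mul_div_comm, div_le_iff₀ (by positivity)]
    nlinarith
  have hmn' : m * n ≤ 4 := by exact_mod_cast hmn
  have hcases : n = 1 ∨ m = 1 ∨ (m = 2 ∧ n = 2) := by
    by_contra hc
    push_neg at hc
    obtain ⟨h1, h2, h3⟩ := hc
    have hm2 : 2 ≤ m := by omega
    have hn2 : 2 ≤ n := by omega
    rcases (show 3 ≤ m ∨ 3 ≤ n by omega) with h4 | h4 <;> nlinarith
  rcases hcases with h | h | ⟨h1, h2⟩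
  · have hr := hrefl β hβ α hα
    rw [hn, h] at hr
    simpa using hr
  · have hr := hrefl α hα β hβ
    rw [hm, h] at hr
    simp only [Int.cast_one, one_smul] at hr
    have := aux_neg_mem Δ hzero hrefl _ hr
    rwa [neg_sub] at this
  · exfalso
    rw [h1] at hm; rw [h2] at hn
    have hpa : (inner ℝ α β : ℝ) = inner ℝ α α := by
      field_simp at hm; push_cast at hm; linarith
    have hpb : (inner ℝ α β : ℝ) = inner ℝ β β := by
      rw [← hba]
      field_simp at hn; push_cast at hn; linarith
    have : (inner ℝ (α - β) (α - β) : ℝ) = 0 := by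
      rw [real_inner_sub_sub_self]; linarith
    exact hne (sub_eq_zero.mp (inner_self_eq_zero.mp this))

lemma aux_coeff_zero (S : Finset V)
    (hli : LinearIndependent ℝ (fun x : (S : Set V) => (x : V)))
    (c : V → ℝ) (h : ∑ γ ∈ S, c γ • γ = 0) : ∀ γ ∈ S, c γ = 0 := by
  intro γ hγ
  have h' : ∑ i : (S : Set V), c i • (i : V) = 0 := by
    rw [Finset.sum_finset_coe (fun γ => c γ • γ) S]; exact h
  exact Fintype.linearIndependent_iff.mp hli (fun i => c i) h' ⟨γ, hγ⟩

lemma aux_coeff_eq (S : Finset V)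
    (hli : LinearIndependent ℝ (fun x : (S : Set V) => (x : V)))
    (c d : V → ℝ) (h : ∑ γ ∈ S, c γ • γ = ∑ γ ∈ S, d γ • γ) :
    ∀ γ ∈ S, c γ = d γ := by
  intro γ hγ
  have h0 : ∑ γ ∈ S, (c γ - d γ) • γ = 0 := by
    simp only [sub_smul, Finset.sum_sub_distrib, h, sub_self]
  have := aux_coeff_zero S hli _ h0 γ hγ
  linarith

end Aux

/-- Let `Δ` be a finite reduced crystallographic root system in a
finite-dimensional real inner ℝ product space, with base `S` (simple roots) and positive
roots `P`.  Let `σ` be an `ℕ`-linear combination of elements of `S` such that `σ ∉ P` and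
`σ` is not of the form `α + β` for two orthogonal simple roots `α, β ∈ S`.  Then there is
at most one `β ∈ S` with `σ − β ∈ P`. -/
theorem at_most_one_simple_root_subtractable
    {V : Type*} [NormedAddCommGroup V] [InnerProductSpace ℝ V] [FiniteDimensional ℝ V]
    (Δ : Finset V)
    (hzero : (0 : V) ∉ Δ)
    (hrefl : ∀ α ∈ Δ, ∀ β ∈ Δ, β - (2 * (inner ℝ α β : ℝ) / (inner ℝ α α : ℝ)) • α ∈ Δ)
    (hcrys : ∀ α ∈ Δ, ∀ β ∈ Δ, ∃ n : ℤ, 2 * (inner ℝ α β : ℝ) / (inner ℝ α α : ℝ) = (n : ℝ))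
    (hred : ∀ α ∈ Δ, ∀ t : ℝ, t • α ∈ Δ → t = 1 ∨ t = -1)
    (S : Finset V) (hSΔ : ∀ α ∈ S, α ∈ Δ)
    (hli : LinearIndependent ℝ (fun x : (S : Set V) => (x : V)))
    (P : Finset V) (hPΔ : ∀ α ∈ P, α ∈ Δ)
    (hsplit : ∀ α ∈ Δ, α ∈ P ∨ -α ∈ P)
    (hdisj : ∀ α ∈ P, -α ∉ P)
    (hSP : ∀ α ∈ S, α ∈ P)
    (hposdecomp : ∀ α ∈ P, ∃ k : V → ℕ, α = ∑ γ ∈ S, (k γ : ℝ) • γ)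
    (σ : V) (k : V → ℕ) (hσ : σ = ∑ γ ∈ S, (k γ : ℝ) • γ)
    (hσP : σ ∉ P)
    (hnotsum : ¬ ∃ α ∈ S, ∃ β ∈ S, α ≠ β ∧ (inner ℝ α β : ℝ) = 0 ∧ σ = α + β) :
    ∀ β₁ ∈ S, ∀ β₂ ∈ S, σ - β₁ ∈ P → σ - β₂ ∈ P → β₁ = β₂ := by
  classical
  intro β₁ hβ₁ β₂ hβ₂ h1 h2
  by_contra hne
  have hβ₁Δ : β₁ ∈ Δ := hSΔ _ hβ₁
  have hβ₂Δ : β₂ ∈ Δ := hSΔ _ hβ₂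
  have negmem := aux_neg_mem Δ hzero hrefl
  have subm := aux_sub_mem Δ hzero hrefl hcrys
  have coeff := aux_coeff_eq S hli
  -- no difference of distinct simple roots lies in P
  have notP_sub : ∀ a ∈ S, ∀ b ∈ S, a ≠ b → a - b ∉ P := by
    intro a ha b hb hab hmem
    obtain ⟨k', hk'⟩ := hposdecomp _ hmem
    have hsum : ∑ γ ∈ S, ((if γ = a then (1:ℝ) else 0) - if γ = b then 1 else 0) • γ
        = a - b := by
      simp only [sub_smul, Finset.sum_sub_distrib, ite_smul, one_smul, zero_smul]
      rw [Finset.sum_ite_eq' S a (fun γ => γ), Finset.sum_ite_eq' S b (fun γ => γ)]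
      simp [ha, hb]
    have hcb := coeff (fun γ => (k' γ : ℝ))
      (fun γ => (if γ = a then (1:ℝ) else 0) - if γ = b then 1 else 0)
      (hk'.symm.trans hsum.symm) b hb
    have hba : b ≠ a := Ne.symm hab
    simp [hba] at hcb
    have : (0:ℝ) ≤ (k' b : ℝ) := Nat.cast_nonneg _
    linarith
  -- σ ≠ 0
  have hσ0 : σ ≠ 0 := by
    intro h
    rw [h, zero_sub] at h1
    exact hdisj β₁ (hSP _ hβ₁) h1
  -- σ ∉ Δ
  have hσΔ : σ ∉ Δ := by
    intro hmem
    rcases hsplit σ hmem with h | h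
    · exact hσP h
    · obtain ⟨k', hk'⟩ := hposdecomp _ h
      have hz : ∑ γ ∈ S, ((k γ : ℝ) + (k' γ : ℝ)) • γ = 0 := by
        simp only [add_smul, Finset.sum_add_distrib, ← hσ, ← hk']
        abel
      have hall := aux_coeff_zero S hli _ hz
      apply hσ0
      rw [hσ]
      apply Finset.sum_eq_zero
      intro γ hγ
      have h0 := hall γ hγ
      have hk0 : (k γ : ℝ) = 0 := by
        have : (0:ℝ) ≤ (k γ : ℝ) := Nat.cast_nonneg _
        have : (0:ℝ) ≤ (k' γ : ℝ) := Nat.cast_nonneg _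
        linarith
      rw [hk0, zero_smul]
  -- inner ℝ product is ≤ 0 whenever the difference is not a root
  have nonpos : ∀ a ∈ Δ, ∀ b ∈ Δ, a ≠ b → a - b ∉ Δ → (inner ℝ a b : ℝ) ≤ 0 := by
    intro a ha b hb hab hnot
    by_contra hgt
    push_neg at hgt
    exact hnot (subm a ha b hb hab hgt)
  have hg1Δ : σ - β₁ ∈ Δ := hPΔ _ h1
  have hg2Δ : σ - β₂ ∈ Δ := hPΔ _ h2
  -- differences of distinct simple roots are not roots
  have hdiffΔ : ∀ a ∈ S, ∀ b ∈ S, a ≠ b → a - b ∉ Δ := by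
    intro a ha b hb hab hmem
    rcases hsplit _ hmem with h | h
    · exact notP_sub a ha b hb hab h
    · rw [neg_sub] at h
      exact notP_sub b hb a ha (Ne.symm hab) h
  have ha0 : (inner ℝ β₁ β₂ : ℝ) ≤ 0 :=
    nonpos β₁ hβ₁Δ β₂ hβ₂Δ hne (hdiffΔ β₁ hβ₁ β₂ hβ₂ hne)
  -- (σ - βᵢ, βᵢ) ≥ 0
  have key : ∀ b ∈ S, σ - b ∈ Δ → (0:ℝ) ≤ inner ℝ (σ - b) b := by
    intro b hb hgΔ
    have hnegb : -b ∈ Δ := negmem b (hSΔ _ hb)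
    have hne' : σ - b ≠ -b := by
      intro h
      exact hσ0 (by rwa [sub_eq_neg_self] at h)
    have hnr : (σ - b) - (-b) ∉ Δ := by
      rw [sub_neg_eq_add, sub_add_cancel]
      exact hσΔ
    have := nonpos _ hgΔ _ hnegb hne' hnr
    rw [inner_neg_right] at this
    linarith
  have hg1b1 := key β₁ hβ₁ hg1Δ
  have hg2b2 := key β₂ hβ₂ hg2Δ
  -- (σ - β₁, σ - β₂) ≤ 0
  have hgg : (inner ℝ (σ - β₁) (σ - β₂) : ℝ) ≤ 0 := by
    apply nonpos _ hg1Δ _ hg2Δ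
    · intro h
      exact hne (sub_right_inj.mp h)
    · rw [show (σ - β₁) - (σ - β₂) = β₂ - β₁ by abel]
      exact hdiffΔ β₂ hβ₂ β₁ hβ₁ (Ne.symm hne)
  by_cases ht : σ - β₁ - β₂ = 0
  · -- σ = β₁ + β₂ : contradiction with hnotsum / σ ∉ Δ
    have hσeq : σ = β₁ + β₂ := by
      rw [sub_sub, sub_eq_zero] at ht
      exact ht
    push_neg at hnotsum
    have hne0 : (inner ℝ β₁ β₂ : ℝ) ≠ 0 := by
      intro h
      exact hnotsum β₁ hβ₁ β₂ hβ₂ hne h hσeq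
    have hlt : (inner ℝ β₁ β₂ : ℝ) < 0 := lt_of_le_of_ne ha0 hne0
    have hne12 : β₁ ≠ -β₂ := by
      intro h
      apply hσ0
      rw [hσeq, h]
      abel
    have hmem := subm β₁ hβ₁Δ (-β₂) (negmem β₂ hβ₂Δ) hne12
      (by rw [inner_neg_right]; linarith)
    rw [sub_neg_eq_add, ← hσeq] at hmem
    exact hσΔ hmem
  · -- τ = σ - β₁ - β₂ ≠ 0 : numerical contradiction
    have hT : (0:ℝ) < inner ℝ (σ - β₁ - β₂) (σ - β₁ - β₂) := aux_inner_self_pos ht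
    have e1 : σ - β₁ = (σ - β₁ - β₂) + β₂ := by abel
    have e2 : σ - β₂ = (σ - β₁ - β₂) + β₁ := by abel
    rw [e1] at hg1b1 hgg
    rw [e2] at hg2b2 hgg
    simp only [inner_add_left, inner_add_right] at hg1b1 hg2b2 hgg
    have c1 := real_inner_comm (σ - β₁ - β₂) β₁
    have c2 := real_inner_comm (σ - β₁ - β₂) β₂
    have c3 := real_inner_comm β₁ β₂
    linarith
end

section
/- Let V be a finite-dimensional ℚ-vector space with a positive-definite symmetric bilinear form (·,·) and let Π ⊆ V be a finite linearly independent set with (α, β) ≤ 0 for all distinct α, β ∈ Π. Let Γ ⊆ V be a finitely generated submonoid with ⟨δ^∨, λ⟩ ≥ 0 for all δ ∈ Π and all λ ∈ Γ, set Λ = ℤΓ, let E ⊆ Γ be a finite generating set of Γ, let ρ be an extremal ray generator of the dual cone K, and set E_ρ = {λ ∈ E : ρ(λ) = 0}. For a subset F ⊆ V write F^⊥ = {α ∈ Π : ⟨α^∨, λ⟩ = 0 for all λ ∈ F}. If E^⊥ ≠ E_ρ^⊥, then there exists δ ∈ Π such that the restriction to Λ of the linear form ⟨δ^∨, ·⟩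 is a positive rational multiple of ρ. -/
/-- Let `V` be a finite-dimensional `ℚ`-vector space with a positive-definite
symmetric bilinear form `B`, `S ⊆ V` finite, linearly independent, with pairwise non-acute
angles (simple roots).  Let `Γ ⊆ V` be a finitely generated submonoid of dominant weights
(`⟨δ^∨, λ⟩ = 2 B δ λ / B δ δ ≥ 0` for `δ ∈ S`, `λ ∈ Γ`), set `Λ = ℤΓ`, let `E ⊆ Γ` be a
finite generating set of `Γ`, let `ρ` be an extremal ray generator of the dual cone `K`, and
set `E_ρ = {λ ∈ E : ρ(λ) = 0}`.  For `F ⊆ V` write `F^⊥ = {α ∈ S : ⟨α^∨, λ⟩ = 0 ∀ λ ∈ F}`.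
If `E^⊥ ≠ (E_ρ)^⊥`, then there exists `δ ∈ S` such that the restriction to `Λ` of the
linear form `⟨δ^∨, ·⟩` is a positive rational multiple of `ρ`. -/
theorem exists_coroot_positive_multiple_of_extremal
    {V : Type*} [AddCommGroup V] [Module ℚ V] [FiniteDimensional ℚ V]
    (B : V →ₗ[ℚ] V →ₗ[ℚ] ℚ)
    (hsymm : ∀ x y : V, B x y = B y x)
    (hposdef : ∀ v : V, v ≠ 0 → 0 < B v v)
    (S : Finset V)
    (hli : LinearIndependent ℚ (fun x : (S : Set V) => (x : V)))
    (hobtuse : ∀ α ∈ S, ∀ β ∈ S, α ≠ β → B α β ≤ 0)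
    (Γ : AddSubmonoid V) (hΓfg : Γ.FG)
    (hdom : ∀ δ ∈ S, ∀ lam ∈ Γ, 0 ≤ 2 * B δ lam / B δ δ)
    (E : Finset V) (hEΓ : ∀ x ∈ E, x ∈ Γ)
    (hEgen : AddSubmonoid.closure (E : Set V) = Γ)
    (ρ : ↥(AddSubgroup.closure (Γ : Set V)) →ₗ[ℤ] ℚ)
    (hρ : IsExtremalRayGen
      {ξ : ↥(AddSubgroup.closure (Γ : Set V)) →ₗ[ℤ] ℚ |
        ∀ γ : ↥(AddSubgroup.closure (Γ : Set V)), (γ : V) ∈ Γ → 0 ≤ ξ γ} ρ)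
    (hperp :
      {α : V | α ∈ S ∧ ∀ lam ∈ E, 2 * B α lam / B α α = 0} ≠
      {α : V | α ∈ S ∧ ∀ lam, ∀ hlam : lam ∈ E,
        ρ ⟨lam, AddSubgroup.subset_closure (hEΓ lam hlam)⟩ = 0 →
        2 * B α lam / B α α = 0}) :
    ∃ δ ∈ S, ∃ c : ℚ, 0 < c ∧
      ∀ x : ↥(AddSubgroup.closure (Γ : Set V)), 2 * B δ (x : V) / B δ δ = c * ρ x := by
  classical
  -- The left perp set is contained in the right one.
  have hsub : {α : V | α ∈ S ∧ ∀ lam ∈ E, 2 * B α lam / B α α = 0} ⊆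
      {α : V | α ∈ S ∧ ∀ lam, ∀ hlam : lam ∈ E,
        ρ ⟨lam, AddSubgroup.subset_closure (hEΓ lam hlam)⟩ = 0 →
        2 * B α lam / B α α = 0} := by
    rintro α ⟨h1, h2⟩
    exact ⟨h1, fun lam hlam _ => h2 lam hlam⟩
  obtain ⟨δ, ⟨hδS, hδ0⟩, hδnot⟩ := Set.exists_of_ssubset (hsub.ssubset_of_ne hperp)
  simp only [Set.mem_setOf_eq, not_and, not_forall] at hδnot
  obtain ⟨μ, hμE, hμne⟩ := hδnot hδS
  -- δ ≠ 0, so B δ δ > 0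
  have hδne : δ ≠ 0 := by
    rintro rfl
    apply hμne
    simp
  have hBpos : 0 < B δ δ := hposdef δ hδne
  -- abbreviations
  set f : V → ℚ := fun v => 2 * B δ v / B δ δ with hf
  have hfadd : ∀ v w : V, f (v + w) = f v + f w := by
    intro v w
    simp only [hf, map_add, mul_add, add_div]
  have hfzero : f 0 = 0 := by simp [hf]
  -- the coroot functional restricted to Λ
  set ξ : ↥(AddSubgroup.closure (Γ : Set V)) →ₗ[ℤ] ℚ :=
    { toFun := fun x => f (x : V)
      map_add' := by
        intro x y
        simpa using hfadd x y
      map_smul' := by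
        intro n x
        have h1 : ((n • x : ↥(AddSubgroup.closure (Γ : Set V))) : V) = n • (x : V) := rfl
        show f _ = n • f _
        rw [h1]
        simp only [hf, map_zsmul, zsmul_eq_mul]
        ring } with hξ
  have hξapp : ∀ x : ↥(AddSubgroup.closure (Γ : Set V)), ξ x = f (x : V) := fun _ => rfl
  -- nonnegativity facts
  have hfE : ∀ l ∈ E, 0 ≤ f l := fun l hl => hdom δ hδS l (hEΓ l hl)
  set g : V → ℚ := fun v =>
    if h : v ∈ AddSubgroup.closure (Γ : Set V) then ρ ⟨v, h⟩ else 0 with hg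
  have hgE : ∀ l (hl : l ∈ E),
      g l = ρ ⟨l, AddSubgroup.subset_closure (hEΓ l hl)⟩ := by
    intro l hl
    exact dif_pos (AddSubgroup.subset_closure (hEΓ l hl))
  have hgE0 : ∀ l ∈ E, 0 ≤ g l := by
    intro l hl
    rw [hgE l hl]
    exact hρ.1 _ (hEΓ l hl)
  have hvanish : ∀ l ∈ E, g l = 0 → f l = 0 := by
    intro l hl h0
    rw [hgE l hl] at h0
    exact hδ0 l hl h0
  -- the finite set where f is positive is nonempty
  have hfμpos : 0 < f μ := lt_of_le_of_ne (hfE μ hμE) (Ne.symm hμne)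
  set T : Finset V := E.filter (fun l => 0 < f l) with hT
  have hTne : T.Nonempty := ⟨μ, Finset.mem_filter.2 ⟨hμE, hfμpos⟩⟩
  set ε : ℚ := T.inf' hTne (fun l => g l / f l) with hε
  have hεpos : 0 < ε := by
    rw [hε, Finset.lt_inf'_iff]
    intro l hl
    obtain ⟨hlE, hlf⟩ := Finset.mem_filter.1 hl
    have hgl : 0 < g l := by
      rcases lt_or_eq_of_le (hgE0 l hlE) with h | h
      · exact h
      · exact absurd (hvanish l hlE h.symm) (ne_of_gt hlf)
    exact div_pos hgl hlf
  have hεle : ∀ l ∈ E, ε * f l ≤ g l := by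
    intro l hl
    rcases lt_or_eq_of_le (hfE l hl) with h | h
    · have hmem : l ∈ T := Finset.mem_filter.2 ⟨hl, h⟩
      have := Finset.inf'_le (fun l => g l / f l) hmem
      rw [← hε] at this
      calc ε * f l ≤ (g l / f l) * f l := by
            exact mul_le_mul_of_nonneg_right this (le_of_lt h)
        _ = g l := div_mul_cancel₀ _ (ne_of_gt h)
    · rw [← h, mul_zero]
      exact hgE0 l hl
  -- ρ - ε • ξ is in the dual cone
  have key : ∀ v, ∀ hv : v ∈ AddSubmonoid.closure (E : Set V),
      0 ≤ ρ ⟨v, AddSubgroup.subset_closure (hEgen ▸ hv : v ∈ Γ)⟩ - ε * f v := by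
    intro v hv
    induction hv using AddSubmonoid.closure_induction with
    | mem l hl =>
        have : ρ ⟨l, AddSubgroup.subset_closure
            (hEgen ▸ AddSubmonoid.subset_closure hl : l ∈ Γ)⟩ = g l := (hgE l hl).symm
        rw [this]
        linarith [hεle l hl]
    | zero =>
        have : (⟨(0 : V), AddSubgroup.subset_closure
            (hEgen ▸ (AddSubmonoid.closure (E : Set V)).zero_mem : (0 : V) ∈ Γ)⟩ :
            ↥(AddSubgroup.closure (Γ : Set V))) = 0 := rfl
        rw [this, map_zero, hfzero]
        simp
    | add x y hx hy ihx ihy =>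
        have hx' : x ∈ AddSubgroup.closure (Γ : Set V) :=
          AddSubgroup.subset_closure (hEgen ▸ hx)
        have hy' : y ∈ AddSubgroup.closure (Γ : Set V) :=
          AddSubgroup.subset_closure (hEgen ▸ hy)
        have : (⟨x + y, AddSubgroup.subset_closure
            (hEgen ▸ add_mem hx hy : x + y ∈ Γ)⟩ :
            ↥(AddSubgroup.closure (Γ : Set V))) = ⟨x, hx'⟩ + ⟨y, hy'⟩ := rfl
        rw [this, map_add, hfadd]
        have h1 := ihx
        have h2 := ihy
        ring_nf
        ring_nf at h1 h2 ⊢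
        linarith
  have hxK : (ρ - ε • ξ) ∈
      {ξ : ↥(AddSubgroup.closure (Γ : Set V)) →ₗ[ℤ] ℚ |
        ∀ γ : ↥(AddSubgroup.closure (Γ : Set V)), (γ : V) ∈ Γ → 0 ≤ ξ γ} := by
    intro γ hγ
    have hγE : (γ : V) ∈ AddSubmonoid.closure (E : Set V) := by rw [hEgen]; exact hγ
    have := key γ hγE
    have hγeq : (⟨(γ : V), AddSubgroup.subset_closure (hEgen ▸ hγE : (γ : V) ∈ Γ)⟩ :
        ↥(AddSubgroup.closure (Γ : Set V))) = γ := Subtype.ext rfl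
    rw [hγeq] at this
    simpa [hξapp, smul_eq_mul] using this
  have hyK : (ε • ξ) ∈
      {ξ : ↥(AddSubgroup.closure (Γ : Set V)) →ₗ[ℤ] ℚ |
        ∀ γ : ↥(AddSubgroup.closure (Γ : Set V)), (γ : V) ∈ Γ → 0 ≤ ξ γ} := by
    intro γ hγ
    have : 0 ≤ f (γ : V) := hdom δ hδS _ hγ
    simpa [hξapp, smul_eq_mul] using mul_nonneg (le_of_lt hεpos) this
  obtain ⟨-, c, hc0, hcξ⟩ := hρ.2.2 _ hxK _ hyK ⟨1, by norm_num, by module⟩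
  -- evaluate at μ to see c > 0
  set μ' : ↥(AddSubgroup.closure (Γ : Set V)) :=
    ⟨μ, AddSubgroup.subset_closure (hEΓ μ hμE)⟩ with hμ'
  have hcμ : ε * f μ = c * ρ μ' := by
    have := congrArg (fun ζ : ↥(AddSubgroup.closure (Γ : Set V)) →ₗ[ℤ] ℚ => ζ μ') hcξ
    simpa [hξapp, smul_eq_mul] using this
  have hcpos : 0 < c := by
    rcases lt_or_eq_of_le hc0 with h | h
    · exact h
    · exfalso
      rw [← h, zero_mul] at hcμ
      exact absurd hcμ (ne_of_gt (mul_pos hεpos hfμpos))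
  refine ⟨δ, hδS, c / ε, div_pos hcpos hεpos, fun x => ?_⟩
  have := congrArg (fun ζ : ↥(AddSubgroup.closure (Γ : Set V)) →ₗ[ℤ] ℚ => ζ x) hcξ
  simp only [LinearMap.smul_apply, smul_eq_mul, hξapp] at this
  have hfx : f (x : V) = 2 * B δ (x : V) / B δ δ := rfl
  rw [← hfx]
  field_simp
  linarith [this]
end

section
/- Let k be a field, M a finitely generated free abelian group, and A a commutative associative unital k-algebra with an M-grading A = ⊕_{m∈M} A_m such that A is an integral domain, A_0 = k·1, and dim_k A_m ≤ 1 for all m. Let Ξ = {m ∈ M : A_m ≠ 0} and suppose Ξ is generated as a monoid by a ℤ-linearly independent set {σ_1, …, σ_r} ⊆ M. Then for any choice of nonzero elements a_i ∈ A_{σ_i} (i = 1, …, r), the k-algebra homomorphism from the polynomial ring k[x_1, …, x_r] to A sending x_i to a_i is an isomorphism; in particular A is isomorphic to a polynomial ring in r variables. -/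
/-- A submodule of rank at most 1 containing a nonzero element is spanned by it. -/
lemma span_eq_of_rank_le_one_aux {k A : Type*} [Field k] [AddCommGroup A] [Module k A]
    (S : Submodule k A) (hS : Module.rank k S ≤ 1) {x : A} (hx : x ∈ S) (hx0 : x ≠ 0) :
    S = Submodule.span k {x} := by
  refine le_antisymm ?_ (Submodule.span_le.mpr (by simpa using hx))
  obtain ⟨v₀, hv₀⟩ := rank_le_one_iff.mp hS
  obtain ⟨c, hc⟩ := hv₀ ⟨x, hx⟩
  have hc0 : c ≠ 0 := by
    rintro rfl
    apply hx0
    simpa using (congrArg Subtype.val hc).symm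
  intro y hy
  obtain ⟨d, hd⟩ := hv₀ ⟨y, hy⟩
  have : y = (d * c⁻¹) • x := by
    have hvx : v₀ = c⁻¹ • (⟨x, hx⟩ : S) := by
      rw [← hc, smul_smul, inv_mul_cancel₀ hc0, one_smul]
    have := congrArg (Subtype.val) hd.symm
    simp only [hvx, smul_smul, SetLike.val_smul] at this ⊢
    exact this
  rw [this]
  exact Submodule.smul_mem _ _ (Submodule.mem_span_singleton_self x)

/-- Let `k` be a field, `M` a finitely generated free abelian group, and `A`
a commutative `k`-algebra with an `M`-grading `A = ⊕_m 𝒜 m` such that `A` is an integral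
domain, `𝒜 0 = k·1`, and `dim_k (𝒜 m) ≤ 1` for all `m`.  Let `Ξ = {m : 𝒜 m ≠ 0}` and suppose
`Ξ` is generated as a monoid by a `ℤ`-linearly independent family `σ : Fin r → M`.  Then for
any choice of nonzero elements `a i ∈ 𝒜 (σ i)`, the `k`-algebra homomorphism
`k[x_1, …, x_r] → A` sending `x_i` to `a i` is an isomorphism; in particular `A` is
isomorphic to a polynomial ring in `r` variables. -/
theorem graded_algebra_polynomial_of_free_weight_monoid
    {k A M : Type*} [Field k] [CommRing A] [IsDomain A] [Algebra k A]
    [AddCommGroup M] [DecidableEq M] [Module.Free ℤ M] [Module.Finite ℤ M]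
    (𝒜 : M → Submodule k A)
    (hinternal : DirectSum.IsInternal 𝒜)
    (hgradedMul : ∀ m m' : M, 𝒜 m * 𝒜 m' ≤ 𝒜 (m + m'))
    (hone : 𝒜 0 = Submodule.span k {(1 : A)})
    (hdim : ∀ m : M, Module.rank k (𝒜 m) ≤ 1)
    (r : ℕ) (σ : Fin r → M)
    (hli : LinearIndependent ℤ σ)
    (hΞ : {m : M | 𝒜 m ≠ ⊥} = ↑(AddSubmonoid.closure (Set.range σ)))
    (a : Fin r → A) (ha : ∀ i, a i ∈ 𝒜 (σ i) ∧ a i ≠ 0) :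
    Function.Bijective (MvPolynomial.aeval (R := k) a) := by
  have hone_mem : (1 : A) ∈ 𝒜 0 := by
    rw [hone]; exact Submodule.mem_span_singleton_self 1
  have hmul : ∀ {m m' : M} {x y : A}, x ∈ 𝒜 m → y ∈ 𝒜 m' → x * y ∈ 𝒜 (m + m') :=
    fun hx hy => hgradedMul _ _ (Submodule.mul_mem_mul hx hy)
  have hpow : ∀ (i : Fin r) (n : ℕ), a i ^ n ∈ 𝒜 (n • σ i) := by
    intro i n
    induction n with
    | zero => simpa using hone_mem
    | succ n ih =>
      rw [pow_succ, succ_nsmul]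
      exact hmul ih (ha i).1
  have hprod : ∀ (s : Finset (Fin r)) (d : Fin r → ℕ),
      (∏ i ∈ s, a i ^ d i) ∈ 𝒜 (∑ i ∈ s, d i • σ i) := by
    intro s d
    induction s using Finset.cons_induction with
    | empty => simpa using hone_mem
    | cons j s hj ih =>
      rw [Finset.prod_cons, Finset.sum_cons]
      exact hmul (hpow j (d j)) ih
  -- the monomial images and their degrees
  set deg : (Fin r →₀ ℕ) → M := fun d => ∑ i ∈ d.support, d i • σ i with hdeg
  set v : (Fin r →₀ ℕ) → A := fun d => ∏ i ∈ d.support, a i ^ d i with hv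
  have hvmem : ∀ d, v d ∈ 𝒜 (deg d) := fun d => hprod d.support d
  have hvne : ∀ d, v d ≠ 0 := by
    intro d
    exact Finset.prod_ne_zero_iff.mpr fun i _ => pow_ne_zero _ (ha i).2
  have hdeg_univ : ∀ d : Fin r →₀ ℕ, deg d = ∑ i, d i • σ i := by
    intro d
    refine Finset.sum_subset (Finset.subset_univ _) ?_
    intro i _ hi
    rw [Finsupp.notMem_support_iff.mp hi, zero_smul]
  have hdeg_inj : Function.Injective deg := by
    intro d e hde
    rw [hdeg_univ d, hdeg_univ e] at hde
    have h0 : ∑ i, ((d i : ℤ) - (e i : ℤ)) • σ i = 0 := by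
      simp only [sub_smul, Finset.sum_sub_distrib, natCast_zsmul]
      rw [hde, sub_self]
    have := Fintype.linearIndependent_iff.mp hli _ h0
    ext i
    have := sub_eq_zero.mp (this i)
    exact_mod_cast this
  -- linear independence of the monomial images
  have hindep : LinearIndependent k v := by
    refine iSupIndep.linearIndependent (fun d => 𝒜 (deg d)) ?_ hvmem hvne
    exact (hinternal.submodule_iSupIndep).comp hdeg_inj
  have haeval : ∀ p : MvPolynomial (Fin r) k,
      MvPolynomial.aeval (R := k) a p = ∑ d ∈ p.support, p.coeff d • v d := by
    intro p
    rw [MvPolynomial.aeval_def, MvPolynomial.eval₂_eq]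
    exact Finset.sum_congr rfl fun d _ => (Algebra.smul_def _ _).symm
  constructor
  · -- injectivity
    rw [injective_iff_map_eq_zero]
    intro p hp
    rw [haeval] at hp
    have := linearIndependent_iff'.mp hindep p.support (fun d => p.coeff d) hp
    ext d
    by_cases hd : d ∈ p.support
    · exact this d hd
    · simpa using MvPolynomial.notMem_support_iff.mp hd
  · -- surjectivity
    have key : ∀ m ∈ AddSubmonoid.closure (Set.range σ),
        ∃ q : MvPolynomial (Fin r) k,
          MvPolynomial.aeval (R := k) a q ≠ 0 ∧
          𝒜 m = Submodule.span k {MvPolynomial.aeval (R := k) a q} := by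
      intro m hm
      induction hm using AddSubmonoid.closure_induction with
      | mem x hx =>
        obtain ⟨i, rfl⟩ := hx
        refine ⟨MvPolynomial.X i, ?_, ?_⟩
        · simpa using (ha i).2
        · rw [MvPolynomial.aeval_X]
          exact span_eq_of_rank_le_one_aux _ (hdim _) (ha i).1 (ha i).2
      | zero =>
        exact ⟨1, by simp, by simpa using hone⟩
      | add x y hx hy ihx ihy =>
        obtain ⟨q₁, hq₁, hq₁span⟩ := ihx
        obtain ⟨q₂, hq₂, hq₂span⟩ := ihy
        refine ⟨q₁ * q₂, ?_, ?_⟩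
        · rw [map_mul]; exact mul_ne_zero hq₁ hq₂
        · rw [map_mul]
          refine span_eq_of_rank_le_one_aux _ (hdim _) ?_ (mul_ne_zero hq₁ hq₂)
          exact hmul
            (hq₁span ▸ Submodule.mem_span_singleton_self _)
            (hq₂span ▸ Submodule.mem_span_singleton_self _)
    intro z
    have hz : z ∈ Subalgebra.toSubmodule (MvPolynomial.aeval (R := k) a).range := by
      have htop : (⊤ : Submodule k A)
          ≤ Subalgebra.toSubmodule (MvPolynomial.aeval (R := k) a).range := by
        rw [← hinternal.submodule_iSup_eq_top]
        refine iSup_le fun m => ?_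
        by_cases hm : 𝒜 m = ⊥
        · rw [hm]; exact bot_le
        · have hmcl : m ∈ AddSubmonoid.closure (Set.range σ) := by
            have : m ∈ {m : M | 𝒜 m ≠ ⊥} := hm
            rwa [hΞ] at this
          obtain ⟨q, _, hqspan⟩ := key m hmcl
          rw [hqspan, Submodule.span_le]
          rintro x hx
          simp only [Set.mem_singleton_iff] at hx
          subst hx
          exact ⟨q, rfl⟩
      exact htop Submodule.mem_top
    obtain ⟨q, hq⟩ := hz
    exact ⟨q, hq⟩
end

section
/- Let Λ be a finitely generated free abelian group and Ξ ⊆ Λ a finitely generated submonoid with Ξ ∩ (−Ξ) = {0}. Suppose Φ ⊆ Λ is a set containing every indecomposable element of Ξ, and every element of Φ is primitive in the subgroup ℤΦ generated by Φ. If σ ∈ ℤΞ is primitive in ℤΞ and ℚ≥0·σ is an extremal ray of the cone ℚ≥0Ξ ⊆ Λ ⊗_ℤ ℚ, then σ ∈ Ξ. In particular, if the saturation Ξ^sat = ℤΞ ∩ ℚ≥0Ξ is a free commutative monoid, then Ξ = Ξ^sat. -/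
open scoped TensorProduct

/-- The convex cone `ℚ≥0Ξ ⊆ Λ ⊗_ℤ ℚ` generated by a submonoid `Ξ` of an abelian group `Λ`:
all finite nonnegative rational combinations of images of elements of `Ξ`. -/
def qConeTensor {Λ : Type*} [AddCommGroup Λ] (Ξ : AddSubmonoid Λ) : Set (ℚ ⊗[ℤ] Λ) :=
  {v | ∃ (s : Finset Λ) (c : Λ → ℚ), (∀ x ∈ s, x ∈ Ξ ∧ 0 ≤ c x) ∧
    v = ∑ x ∈ s, c x • ((1 : ℚ) ⊗ₜ[ℤ] x)}

/-- The ray `ℚ≥0·σ ⊆ Λ ⊗_ℤ ℚ` through (the image of) an element `σ ∈ Λ`. -/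
def rayTensor {Λ : Type*} [AddCommGroup Λ] (σ : Λ) : Set (ℚ ⊗[ℤ] Λ) :=
  {v | ∃ c : ℚ, 0 ≤ c ∧ v = c • ((1 : ℚ) ⊗ₜ[ℤ] σ)}


section Cone

variable {Λ : Type*} [AddCommGroup Λ] {Ξ : AddSubmonoid Λ}

lemma mem_qCone_of_mem {x : Λ} (hx : x ∈ Ξ) : (1 : ℚ) ⊗ₜ[ℤ] x ∈ qConeTensor Ξ := by
  classical
  exact ⟨{x}, fun _ => 1, by simp [hx], by simp⟩

lemma qCone_zero (Ξ : AddSubmonoid Λ) : (0 : ℚ ⊗[ℤ] Λ) ∈ qConeTensor Ξ :=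
  ⟨∅, 0, by simp, by simp⟩

lemma qCone_add {v w : ℚ ⊗[ℤ] Λ} (hv : v ∈ qConeTensor Ξ) (hw : w ∈ qConeTensor Ξ) :
    v + w ∈ qConeTensor Ξ := by
  classical
  obtain ⟨s, c, hs, rfl⟩ := hv
  obtain ⟨t, d, ht, rfl⟩ := hw
  refine ⟨s ∪ t, fun x => (if x ∈ s then c x else 0) + (if x ∈ t then d x else 0), ?_, ?_⟩
  · intro x hx
    have hmem : x ∈ Ξ := by
      rcases Finset.mem_union.mp hx with h | h
      exacts [(hs x h).1, (ht x h).1]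
    refine ⟨hmem, add_nonneg ?_ ?_⟩
    · by_cases h : x ∈ s
      · simpa [h] using (hs x h).2
      · simp [h]
    · by_cases h : x ∈ t
      · simpa [h] using (ht x h).2
      · simp [h]
  · calc ∑ x ∈ s, c x • ((1:ℚ) ⊗ₜ[ℤ] x) + ∑ x ∈ t, d x • ((1:ℚ) ⊗ₜ[ℤ] x)
        = ∑ x ∈ s ∪ t, (if x ∈ s then c x • ((1:ℚ) ⊗ₜ[ℤ] x) else 0)
          + ∑ x ∈ s ∪ t, (if x ∈ t then d x • ((1:ℚ) ⊗ₜ[ℤ] x) else 0) := by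
          rw [Finset.sum_ite_mem, Finset.sum_ite_mem, Finset.union_inter_cancel_left,
            Finset.union_inter_cancel_right]
      _ = ∑ x ∈ s ∪ t,
            ((if x ∈ s then c x else 0) + (if x ∈ t then d x else 0)) • ((1:ℚ) ⊗ₜ[ℤ] x) := by
          rw [← Finset.sum_add_distrib]
          refine Finset.sum_congr rfl fun x _ => ?_
          by_cases h1 : x ∈ s <;> by_cases h2 : x ∈ t <;> simp [h1, h2, add_smul]

lemma qCone_smul {v : ℚ ⊗[ℤ] Λ} {q : ℚ} (hq : 0 ≤ q) (hv : v ∈ qConeTensor Ξ) :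
    q • v ∈ qConeTensor Ξ := by
  obtain ⟨s, c, hs, rfl⟩ := hv
  refine ⟨s, fun x => q * c x, fun x hx => ⟨(hs x hx).1, mul_nonneg hq (hs x hx).2⟩, ?_⟩
  rw [Finset.smul_sum]
  exact Finset.sum_congr rfl fun x _ => smul_smul q (c x) _

lemma qCone_sum {α : Type*} (s : Finset α) (f : α → ℚ ⊗[ℤ] Λ)
    (h : ∀ x ∈ s, f x ∈ qConeTensor Ξ) : ∑ x ∈ s, f x ∈ qConeTensor Ξ := by
  classical
  induction s using Finset.induction with
  | empty => simpa using qCone_zero Ξ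
  | insert _ _ hx ih =>
    rw [Finset.sum_insert hx]
    exact qCone_add (h _ (Finset.mem_insert_self _ _))
      (ih fun x hxs => h x (Finset.mem_insert_of_mem hxs))

end Cone

lemma clear_denoms {α : Type*} [DecidableEq α] (t : Finset α) (q : α → ℚ) :
    ∃ (d : ℕ) (m : α → ℤ), 0 < d ∧ ∀ i ∈ t,
      (m i : ℚ) = q i * d ∧ (0 ≤ q i → 0 ≤ m i) ∧ (q i ≠ 0 → m i ≠ 0) := by
  refine ⟨∏ j ∈ t, (q j).den, fun i => (q i).num * ∏ j ∈ t.erase i, ((q j).den : ℤ),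
    Finset.prod_pos fun j _ => (q j).pos, ?_⟩
  intro i hi
  have hd : (∏ j ∈ t, ((q j).den : ℚ)) = ((q i).den : ℚ) * ∏ j ∈ t.erase i, ((q j).den : ℚ) :=
    (Finset.mul_prod_erase t _ hi).symm
  have hprodpos : (0:ℤ) < ∏ j ∈ t.erase i, ((q j).den : ℤ) :=
    Finset.prod_pos fun j _ => by exact_mod_cast (q j).pos
  refine ⟨?_, ?_, ?_⟩
  · push_cast
    rw [hd, ← mul_assoc, Rat.mul_den_eq_num]
  · intro h
    exact mul_nonneg (Rat.num_nonneg.mpr h) hprodpos.le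
  · intro h
    exact mul_ne_zero (Rat.num_ne_zero.mpr h) hprodpos.ne'

section Aux

variable {Λ : Type*} [AddCommGroup Λ]

lemma tmul_one_zsmul (a : ℤ) (x : Λ) :
    (1 : ℚ) ⊗ₜ[ℤ] (a • x) = (a : ℚ) • ((1 : ℚ) ⊗ₜ[ℤ] x) := by
  rw [TensorProduct.tmul_smul, ← Int.cast_smul_eq_zsmul ℚ]

lemma tmul_one_nsmul (k : ℕ) (x : Λ) :
    (1 : ℚ) ⊗ₜ[ℤ] (k • x) = (k : ℚ) • ((1 : ℚ) ⊗ₜ[ℤ] x) := by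
  rw [← natCast_zsmul, tmul_one_zsmul]; norm_num

lemma tmul_one_eq_zero [Module.Free ℤ Λ] {x : Λ} (h : (1 : ℚ) ⊗ₜ[ℤ] x = 0) : x = 0 := by
  classical
  let B := Module.Free.chooseBasis ℤ Λ
  have h2 := congrArg (Algebra.TensorProduct.basis ℚ B).repr h
  rw [map_zero, Algebra.TensorProduct.basis_repr_tmul, one_smul] at h2
  have h4 : B.repr x = 0 := by
    ext i
    have h3 := DFunLike.congr_fun h2 i
    simpa [Finsupp.mapRange_apply] using h3
  simpa using B.repr.map_eq_zero_iff.mp h4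

lemma tmul_one_inj [Module.Free ℤ Λ] {x y : Λ} (h : (1 : ℚ) ⊗ₜ[ℤ] x = (1 : ℚ) ⊗ₜ[ℤ] y) :
    x = y := by
  have h2 : (1 : ℚ) ⊗ₜ[ℤ] (x - y) = 0 := by rw [TensorProduct.tmul_sub, h, sub_self]
  exact sub_eq_zero.mp (tmul_one_eq_zero h2)

lemma tmul_one_sum {α : Type*} (s : Finset α) (f : α → Λ) :
    (1 : ℚ) ⊗ₜ[ℤ] (∑ x ∈ s, f x) = ∑ x ∈ s, (1 : ℚ) ⊗ₜ[ℤ] (f x) :=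
  TensorProduct.tmul_sum 1 s f

end Aux

lemma gordan {V : Type*} [AddCommGroup V] [Module ℚ V] :
    ∀ (k : ℕ) (v : Fin k → V),
      (∃ f : V →ₗ[ℚ] ℚ, ∀ i, 0 < f (v i)) ∨
      (∃ μ : Fin k → ℚ, (∀ i, 0 ≤ μ i) ∧ (∃ i, μ i ≠ 0) ∧ ∑ i, μ i • v i = 0) := by
  intro k
  induction k with
  | zero => exact fun v => Or.inl ⟨0, fun i => i.elim0⟩
  | succ k ih =>
    intro v
    by_cases hv : v (Fin.last k) = 0
    · right
      refine ⟨Fin.snoc 0 1, fun i => ?_, ⟨Fin.last k, by simp⟩, ?_⟩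
      · refine Fin.lastCases ?_ (fun j => ?_) i <;> simp
      · rw [Fin.sum_univ_castSucc]
        simp [hv]
    rcases ih (fun i => v i.castSucc) with ⟨f, hf⟩ | ⟨μ, hμ0, hμne, hμsum⟩
    · by_cases hcpos : 0 < f (v (Fin.last k))
      · left
        exact ⟨f, fun i => Fin.lastCases hcpos hf i⟩
      push_neg at hcpos
      set c := f (v (Fin.last k)) with hc
      set w : Fin k → V := fun i => f (v i.castSucc) • v (Fin.last k) - c • v i.castSucc with hw
      have hgw : ∀ (g : V →ₗ[ℚ] ℚ) (i : Fin k),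
          g (w i) = f (v i.castSucc) * g (v (Fin.last k)) - c * g (v i.castSucc) := by
        intro g i
        simp [hw, map_sub, map_smul, smul_eq_mul]
      rcases ih w with ⟨g, hg⟩ | ⟨μ, hμ0, ⟨j, hj⟩, hμsum⟩
      · left
        rcases eq_or_lt_of_le hcpos with hc0 | hcneg
        · rcases Nat.eq_zero_or_pos k with rfl | hk
          · have h0 : ∃ φ : Module.Dual ℚ V, φ (v (Fin.last 0)) ≠ 0 := by
              by_contra h; push_neg at h
              exact hv ((Module.forall_dual_apply_eq_zero_iff ℚ _).mp h)
            obtain ⟨φ, hφ⟩ := h0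
            rcases hφ.lt_or_gt with hneg | hpos
            · exact ⟨-φ, fun i => Fin.lastCases (by simpa using hneg) (fun j => j.elim0) i⟩
            · exact ⟨φ, fun i => Fin.lastCases hpos (fun j => j.elim0) i⟩
          · have hglast : 0 < g (v (Fin.last k)) := by
              have h0 := hg ⟨0, hk⟩
              rw [hgw g ⟨0, hk⟩, hc0, zero_mul, sub_zero] at h0
              nlinarith [hf ⟨0, hk⟩]
            set M : ℚ := 1 + ∑ i : Fin k, |g (v i.castSucc)| / f (v i.castSucc) with hM
            refine ⟨M • f + g, fun i => ?_⟩
            refine Fin.lastCases ?_ (fun i => ?_) i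
            · simp only [LinearMap.add_apply, LinearMap.smul_apply, smul_eq_mul, ← hc, hc0,
                mul_zero, zero_add]
              exact hglast
            · have hfi := hf i
              have hsum_ge : |g (v i.castSucc)| / f (v i.castSucc)
                  ≤ ∑ j : Fin k, |g (v j.castSucc)| / f (v j.castSucc) :=
                Finset.single_le_sum (fun j _ => div_nonneg (abs_nonneg _) (hf j).le)
                  (Finset.mem_univ i)
              have hMf : f (v i.castSucc) + |g (v i.castSucc)| ≤ M * f (v i.castSucc) := by
                rw [hM, add_mul, one_mul]
                have hdm : |g (v i.castSucc)| / f (v i.castSucc) * f (v i.castSucc)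
                    = |g (v i.castSucc)| := div_mul_cancel₀ _ hfi.ne'
                nlinarith
              have habs := neg_abs_le (g (v i.castSucc))
              simp only [LinearMap.add_apply, LinearMap.smul_apply, smul_eq_mul]
              nlinarith
        · rcases Nat.eq_zero_or_pos k with rfl | hk
          · refine ⟨-f, fun i => Fin.lastCases ?_ (fun j => j.elim0) i⟩
            simp only [LinearMap.neg_apply, ← hc]
            linarith
          · have hne : (Finset.univ : Finset (Fin k)).Nonempty := ⟨⟨0, hk⟩, Finset.mem_univ _⟩
            set ε : ℚ := Finset.univ.inf' hne (fun i : Fin k => g (w i) / f (v i.castSucc))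
              with hε
            have hεpos : 0 < ε := by
              rw [hε, Finset.lt_inf'_iff]
              exact fun i _ => div_pos (hg i) (hf i)
            refine ⟨g (v (Fin.last k)) • f - c • g - (ε/2) • f, fun i => ?_⟩
            refine Fin.lastCases ?_ (fun i => ?_) i
            · simp only [LinearMap.sub_apply, LinearMap.smul_apply, smul_eq_mul, ← hc]
              nlinarith
            · have hεle : ε ≤ g (w i) / f (v i.castSucc) :=
                Finset.inf'_le _ (Finset.mem_univ i)
              have hfi := hf i
              have h2 : ε * f (v i.castSucc) ≤ g (w i) := by
                rw [le_div_iff₀ hfi] at hεle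
                linarith
              have h3 := hgw g i
              simp only [LinearMap.sub_apply, LinearMap.smul_apply, smul_eq_mul]
              nlinarith
      · right
        refine ⟨Fin.snoc (fun i => -c * μ i) (∑ i, μ i * f (v i.castSucc)), fun i => ?_, ?_, ?_⟩
        · refine Fin.lastCases ?_ (fun i => ?_) i
          · simp only [Fin.snoc_last]
            exact Finset.sum_nonneg fun i _ => mul_nonneg (hμ0 i) (hf i).le
          · simp only [Fin.snoc_castSucc]
            exact mul_nonneg (by linarith) (hμ0 i)
        · refine ⟨Fin.last k, ?_⟩
          simp only [Fin.snoc_last]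
          exact (Finset.sum_pos' (fun i _ => mul_nonneg (hμ0 i) (hf i).le)
            ⟨j, Finset.mem_univ j, mul_pos (lt_of_le_of_ne (hμ0 j) (Ne.symm hj)) (hf j)⟩).ne'
        · rw [Fin.sum_univ_castSucc]
          simp only [Fin.snoc_castSucc, Fin.snoc_last]
          have hexp : ∑ i : Fin k, μ i • w i
              = (∑ i : Fin k, μ i * f (v i.castSucc)) • v (Fin.last k)
                - ∑ i : Fin k, (c * μ i) • v i.castSucc := by
            rw [Finset.sum_smul, ← Finset.sum_sub_distrib]
            refine Finset.sum_congr rfl fun i _ => ?_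
            rw [hw]
            simp only [smul_sub, smul_smul]
            ring_nf
          rw [hexp] at hμsum
          have hlast := sub_eq_zero.mp hμsum
          rw [hlast, ← Finset.sum_add_distrib]
          refine Finset.sum_eq_zero fun i _ => ?_
          have hz : -c * μ i + c * μ i = 0 := by ring
          rw [← add_smul, hz, zero_smul]
    · right
      refine ⟨Fin.snoc μ 0, fun i => ?_, ?_, ?_⟩
      · refine Fin.lastCases ?_ (fun i => ?_) i <;> simp [hμ0]
      · obtain ⟨j, hj⟩ := hμne
        exact ⟨j.castSucc, by simpa using hj⟩
      · rw [Fin.sum_univ_castSucc]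
        simp [hμsum]

section Func

variable {Λ : Type*} [AddCommGroup Λ] [Module.Free ℤ Λ]

lemma exists_pos_functional (Ξ : AddSubmonoid Λ) (hfg : Ξ.FG)
    (hsharp : ∀ x ∈ Ξ, -x ∈ Ξ → x = 0) :
    ∃ (f : (ℚ ⊗[ℤ] Λ) →ₗ[ℚ] ℚ) (δ : ℚ), 0 < δ ∧
      (∀ x ∈ Ξ, 0 ≤ f ((1 : ℚ) ⊗ₜ[ℤ] x)) ∧
      (∀ x ∈ Ξ, x ≠ 0 → δ ≤ f ((1 : ℚ) ⊗ₜ[ℤ] x)) := by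
  classical
  obtain ⟨T, hT⟩ := hfg
  set T' : Finset Λ := T.erase 0 with hT'
  have hmemT : ∀ g ∈ T, g ∈ Ξ := fun g hg => hT ▸ AddSubmonoid.subset_closure hg
  by_cases hne : T'.Nonempty
  · obtain ⟨f, hf⟩ : ∃ f : (ℚ ⊗[ℤ] Λ) →ₗ[ℚ] ℚ, ∀ g ∈ T', 0 < f ((1:ℚ) ⊗ₜ[ℤ] g) := by
      set e := T'.equivFin with he
      rcases gordan T'.card (fun i => (1:ℚ) ⊗ₜ[ℤ] (e.symm i : Λ)) with ⟨f, hf⟩ |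
        ⟨μ, hμ0, ⟨j, hj⟩, hμsum⟩
      · refine ⟨f, fun g hg => ?_⟩
        have := hf (e ⟨g, hg⟩)
        simpa using this
      · exfalso
        obtain ⟨d, m, hd, hm⟩ := clear_denoms (Finset.univ : Finset (Fin T'.card)) μ
        have hz : ∑ i, m i • ((e.symm i : Λ)) = 0 := by
          apply tmul_one_eq_zero
          rw [tmul_one_sum]
          have h1 : ∀ i ∈ Finset.univ, (1:ℚ) ⊗ₜ[ℤ] (m i • (e.symm i : Λ))
              = (d:ℚ) • (μ i • ((1:ℚ) ⊗ₜ[ℤ] (e.symm i : Λ))) := by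
            intro i hi
            rw [tmul_one_zsmul, (hm i hi).1, smul_smul, mul_comm (μ i) ((d:ℚ))]
          rw [Finset.sum_congr rfl h1, ← Finset.smul_sum, hμsum, smul_zero]
        have hmj : 0 < m j := by
          rcases (hm j (Finset.mem_univ j)).2 with ⟨hge, hne0⟩
          exact lt_of_le_of_ne (hge (hμ0 j)) (Ne.symm (hne0 hj))
        have hsum' : m j • ((e.symm j : Λ)) + ∑ i ∈ Finset.univ.erase j, m i • ((e.symm i : Λ)) = 0 := by
          rw [← hz]
          exact Finset.add_sum_erase _ (fun i => m i • ((e.symm i : Λ))) (Finset.mem_univ j)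
        have hzsmem : ∀ (i : Fin T'.card), m i • ((e.symm i : Λ)) ∈ Ξ := by
          intro i
          have h0 : 0 ≤ m i := ((hm i (Finset.mem_univ i)).2).1 (hμ0 i)
          have : m i • ((e.symm i : Λ)) = (m i).toNat • ((e.symm i : Λ)) := by
            rw [← natCast_zsmul, Int.toNat_of_nonneg h0]
          rw [this]
          exact nsmul_mem (hmemT _ (Finset.mem_of_mem_erase (e.symm i).2)) _
        have hx0 : m j • ((e.symm j : Λ)) = 0 := by
          apply hsharp _ (hzsmem j)
          rw [neg_eq_of_add_eq_zero_right hsum']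
          exact AddSubmonoid.sum_mem _ fun i _ => hzsmem i
        have : ((e.symm j : Λ)) = 0 := by
          rcases smul_eq_zero.mp hx0 with h | h
          · exact absurd h (by exact_mod_cast hmj.ne')
          · exact h
        exact Finset.ne_of_mem_erase (e.symm j).2 this
    set δ : ℚ := T'.inf' hne (fun g => f ((1:ℚ) ⊗ₜ[ℤ] g)) with hδ
    have hδpos : 0 < δ := by
      rw [hδ, Finset.lt_inf'_iff]
      exact fun g hg => hf g hg
    have key : ∀ x ∈ Ξ, 0 ≤ f ((1:ℚ) ⊗ₜ[ℤ] x) ∧ (x ≠ 0 → δ ≤ f ((1:ℚ) ⊗ₜ[ℤ] x)) := by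
      intro x hx
      rw [← hT] at hx
      obtain ⟨l, hl, hsum⟩ := AddSubmonoid.exists_multiset_of_mem_closure hx
      set F : Λ →+ ℚ :=
        f.toAddMonoidHom.comp ((TensorProduct.mk ℤ ℚ Λ 1).toAddMonoidHom) with hF
      have hFx : ∀ z : Λ, F z = f ((1:ℚ) ⊗ₜ[ℤ] z) := fun z => rfl
      have hFsum : f ((1:ℚ) ⊗ₜ[ℤ] x) = (l.map F).sum := by
        rw [← hsum, ← hFx, AddMonoidHom.map_multiset_sum]
      have hF0 : ∀ y ∈ l, 0 ≤ F y := by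
        intro y hy
        rcases eq_or_ne y 0 with rfl | hy0
        · simp
        · exact le_of_lt (by rw [hFx]; exact hf y (Finset.mem_erase.mpr ⟨hy0, hl y hy⟩))
      constructor
      · rw [hFsum]
        apply Multiset.sum_nonneg
        intro a ha
        obtain ⟨y, hy, rfl⟩ := Multiset.mem_map.mp ha
        exact hF0 y hy
      · intro hx0
        have hex : ∃ y ∈ l, y ≠ (0:Λ) := by
          by_contra h
          push_neg at h
          exact hx0 (by rw [← hsum]; exact Multiset.sum_eq_zero fun y hy => h y hy)
        obtain ⟨y, hyl, hy0⟩ := hex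
        have hrest : 0 ≤ ((l.erase y).map F).sum := by
          apply Multiset.sum_nonneg
          intro a ha
          obtain ⟨z, hz, rfl⟩ := Multiset.mem_map.mp ha
          exact hF0 z (Multiset.mem_of_mem_erase hz)
        have hsplit : (l.map F).sum = F y + ((l.erase y).map F).sum := by
          rw [← Multiset.cons_erase hyl]
          simp
        have hFy : δ ≤ F y := by
          rw [hFx]
          exact Finset.inf'_le _ (Finset.mem_erase.mpr ⟨hy0, hl y hyl⟩)
        rw [hFsum, hsplit]
        linarith
    exact ⟨f, δ, hδpos, fun x hx => (key x hx).1, fun x hx h => (key x hx).2 h⟩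
  · refine ⟨0, 1, one_pos, by simp, ?_⟩
    intro x hx hx0
    exfalso
    apply hx0
    have hT0 : (T : Set Λ) ⊆ {0} := by
      intro g hg
      rcases eq_or_ne g 0 with rfl | h
      · rfl
      · exact absurd (⟨g, Finset.mem_erase.mpr ⟨h, hg⟩⟩ : T'.Nonempty) hne
    have : Ξ ≤ AddSubmonoid.closure ({0} : Set Λ) := by
      rw [← hT]
      exact AddSubmonoid.closure_le.mpr (fun g hg => AddSubmonoid.subset_closure (hT0 hg))
    have h0 : AddSubmonoid.closure ({0} : Set Λ) ≤ ⊥ :=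
      AddSubmonoid.closure_le.mpr (by simp)
    simpa using h0 (this hx)

lemma mem_zspan_indec (Ξ : AddSubmonoid Λ) (hfg : Ξ.FG)
    (hsharp : ∀ x ∈ Ξ, -x ∈ Ξ → x = 0) (Φ : Set Λ)
    (hΦ : ∀ x ∈ Ξ, x ≠ 0 →
      (¬ ∃ y ∈ Ξ, ∃ z ∈ Ξ, y ≠ 0 ∧ z ≠ 0 ∧ x = y + z) → x ∈ Φ) :
    ∀ x ∈ Ξ, x ∈ AddSubgroup.closure Φ := by
  obtain ⟨f, δ, hδ, hge0, hgeδ⟩ := exists_pos_functional Ξ hfg hsharp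
  suffices h : ∀ (n : ℕ), ∀ x ∈ Ξ, f ((1:ℚ) ⊗ₜ[ℤ] x) ≤ n * δ → x ∈ AddSubgroup.closure Φ by
    intro x hx
    obtain ⟨n, hn⟩ := exists_nat_ge (f ((1:ℚ) ⊗ₜ[ℤ] x) / δ)
    exact h n x hx (by rw [← div_le_iff₀ hδ] at *; exact hn)
  intro n
  induction n with
  | zero =>
    intro x hx hle
    rcases eq_or_ne x 0 with rfl | hne
    · exact zero_mem _
    · exfalso
      have := hgeδ x hx hne
      simp only [Nat.cast_zero, zero_mul] at hle
      linarith
  | succ n ih =>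
    intro x hx hle
    rcases eq_or_ne x 0 with rfl | hne
    · exact zero_mem _
    by_cases hdec : ∃ y ∈ Ξ, ∃ z ∈ Ξ, y ≠ 0 ∧ z ≠ 0 ∧ x = y + z
    · obtain ⟨y, hy, z, hz, hy0, hz0, rfl⟩ := hdec
      have hfy := hgeδ y hy hy0
      have hfz := hgeδ z hz hz0
      have hadd : f ((1:ℚ) ⊗ₜ[ℤ] (y + z)) = f ((1:ℚ) ⊗ₜ[ℤ] y) + f ((1:ℚ) ⊗ₜ[ℤ] z) := by
        rw [TensorProduct.tmul_add, map_add]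
      rw [hadd] at hle
      push_cast at hle
      exact add_mem (ih y hy (by linarith)) (ih z hz (by linarith))
    · exact AddSubgroup.subset_closure (hΦ x hx hne hdec)

end Func

section Core

variable {Λ : Type*} [AddCommGroup Λ] [Module.Free ℤ Λ]

lemma ray_multiple (Ξ : AddSubmonoid Λ) (σ x : Λ)
    (hσZ : σ ∈ AddSubgroup.closure (Ξ : Set Λ))
    (hσprim : ∀ (n : ℕ) (w : Λ), 0 < n → w ∈ AddSubgroup.closure (Ξ : Set Λ) →
      σ = n • w → n = 1)
    (hx : x ∈ Ξ) (hx0 : x ≠ 0) (q : ℚ) (hq0 : 0 ≤ q)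
    (hq : (1 : ℚ) ⊗ₜ[ℤ] x = q • ((1 : ℚ) ⊗ₜ[ℤ] σ)) :
    ∃ k : ℕ, 0 < k ∧ x = k • σ := by
  have hqne : q ≠ 0 := by
    rintro rfl
    rw [zero_smul] at hq
    exact hx0 (tmul_one_eq_zero hq)
  have hqpos : 0 < q := lt_of_le_of_ne hq0 (Ne.symm hqne)
  have hbx : (q.den : ℤ) • x = q.num • σ := by
    apply tmul_one_inj
    rw [tmul_one_zsmul, tmul_one_zsmul, hq, smul_smul]
    congr 1
    push_cast
    rw [mul_comm ((q.den : ℚ)) q, Rat.mul_den_eq_num]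
  have hcop : IsCoprime (q.num) ((q.den : ℤ)) := by
    rw [Int.isCoprime_iff_gcd_eq_one]
    simpa [Int.gcd] using q.reduced
  obtain ⟨u, v, huv⟩ := hcop
  have hw : σ = (q.den : ℤ) • (u • x + v • σ) := by
    have h1 : σ = (u * q.num + v * (q.den : ℤ)) • σ := by
      rw [huv, one_zsmul]
    calc σ = (u * q.num + v * (q.den : ℤ)) • σ := h1
      _ = u • (q.num • σ) + v • ((q.den : ℤ) • σ) := by
          rw [add_smul, mul_smul, mul_smul]
      _ = u • ((q.den : ℤ) • x) + v • ((q.den : ℤ) • σ) := by rw [hbx]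
      _ = (q.den : ℤ) • (u • x + v • σ) := by
          rw [smul_add, smul_comm u, smul_comm v]
  have hwmem : u • x + v • σ ∈ AddSubgroup.closure (Ξ : Set Λ) :=
    add_mem (zsmul_mem (AddSubgroup.subset_closure hx) u) (zsmul_mem hσZ v)
  have hden1 : q.den = 1 := by
    apply hσprim q.den _ q.pos hwmem
    rw [← natCast_zsmul]
    exact hw
  have hx_eq : x = q.num • σ := by
    rw [hden1] at hbx
    simpa using hbx
  have hnum_pos : 0 < q.num := Rat.num_pos.mpr hqpos
  refine ⟨q.num.toNat, by omega, ?_⟩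
  rw [← natCast_zsmul, Int.toNat_of_nonneg hnum_pos.le]
  exact hx_eq

lemma core_mem (Ξ : AddSubmonoid Λ) (hΞfg : Ξ.FG)
    (hsharp : ∀ x ∈ Ξ, -x ∈ Ξ → x = 0)
    (Φ : Set Λ)
    (hΦ : ∀ x ∈ Ξ, x ≠ 0 →
      (¬ ∃ y ∈ Ξ, ∃ z ∈ Ξ, y ≠ 0 ∧ z ≠ 0 ∧ x = y + z) → x ∈ Φ)
    (hΦprim : ∀ x ∈ Φ, ∀ (n : ℕ) (w : Λ), 0 < n → w ∈ AddSubgroup.closure Φ →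
      x = n • w → n = 1)
    (σ : Λ) (hσZ : σ ∈ AddSubgroup.closure (Ξ : Set Λ))
    (hσprim : ∀ (n : ℕ) (w : Λ), 0 < n → w ∈ AddSubgroup.closure (Ξ : Set Λ) →
      σ = n • w → n = 1)
    (hσmem : (1 : ℚ) ⊗ₜ[ℤ] σ ∈ qConeTensor Ξ)
    (hσne : (1 : ℚ) ⊗ₜ[ℤ] σ ≠ 0)
    (hσext : ∀ x ∈ qConeTensor Ξ, ∀ y ∈ qConeTensor Ξ,
      x + y ∈ rayTensor σ → x ∈ rayTensor σ ∧ y ∈ rayTensor σ) :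
    σ ∈ Ξ := by
  classical
  have hσ0 : σ ≠ 0 := fun h => hσne (by rw [h, TensorProduct.tmul_zero])
  have hex : ∃ k : ℕ, 0 < k ∧ k • σ ∈ Ξ := by
    obtain ⟨s, c, hsc, hsum⟩ := hσmem
    have hne : ∑ x ∈ s, c x • ((1:ℚ) ⊗ₜ[ℤ] x) ≠ 0 := by rw [← hsum]; exact hσne
    obtain ⟨x, hxs, hxne⟩ := Finset.exists_ne_zero_of_sum_ne_zero hne
    have hcx : 0 < c x := by
      rcases lt_or_eq_of_le (hsc x hxs).2 with h | h
      · exact h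
      · exact absurd (by rw [← h, zero_smul]) hxne
    have hx0 : x ≠ 0 := by
      rintro rfl
      exact hxne (by rw [TensorProduct.tmul_zero, smul_zero])
    have hterm : c x • ((1:ℚ) ⊗ₜ[ℤ] x) ∈ qConeTensor Ξ :=
      qCone_smul (hsc x hxs).2 (mem_qCone_of_mem (hsc x hxs).1)
    have hrest : ∑ y ∈ s.erase x, c y • ((1:ℚ) ⊗ₜ[ℤ] y) ∈ qConeTensor Ξ :=
      qCone_sum _ _ fun y hy =>
        qCone_smul (hsc y (Finset.mem_of_mem_erase hy)).2
          (mem_qCone_of_mem (hsc y (Finset.mem_of_mem_erase hy)).1)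
    have hsum' : c x • ((1:ℚ) ⊗ₜ[ℤ] x) + ∑ y ∈ s.erase x, c y • ((1:ℚ) ⊗ₜ[ℤ] y)
        ∈ rayTensor σ := by
      have : c x • ((1:ℚ) ⊗ₜ[ℤ] x) + ∑ y ∈ s.erase x, c y • ((1:ℚ) ⊗ₜ[ℤ] y)
          = (1 : ℚ) ⊗ₜ[ℤ] σ := by
        rw [hsum, ← Finset.add_sum_erase _ (fun y => c y • ((1:ℚ) ⊗ₜ[ℤ] y)) hxs]
      rw [this]
      exact ⟨1, zero_le_one, (one_smul _ _).symm⟩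
    obtain ⟨e, he0, heq⟩ := (hσext _ hterm _ hrest hsum').1
    have hxq : (1:ℚ) ⊗ₜ[ℤ] x = (e / c x) • ((1:ℚ) ⊗ₜ[ℤ] σ) := by
      have h1 := congrArg (fun v => (c x)⁻¹ • v) heq
      simp only [smul_smul, inv_mul_cancel₀ hcx.ne', one_smul] at h1
      rw [h1, div_eq_inv_mul]
    obtain ⟨k, hk, hkx⟩ := ray_multiple Ξ σ x hσZ hσprim (hsc x hxs).1 hx0 (e / c x)
      (div_nonneg he0 hcx.le) hxq
    exact ⟨k, hk, by rw [← hkx]; exact (hsc x hxs).1⟩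
  set m := Nat.find hex with hm
  obtain ⟨hmpos, hmmem⟩ : 0 < m ∧ m • σ ∈ Ξ := Nat.find_spec hex
  have hindec : ¬ ∃ y ∈ Ξ, ∃ z ∈ Ξ, y ≠ 0 ∧ z ≠ 0 ∧ m • σ = y + z := by
    rintro ⟨y, hy, z, hz, hy0, hz0, hyz⟩
    have hsumray : ((1:ℚ) ⊗ₜ[ℤ] y) + ((1:ℚ) ⊗ₜ[ℤ] z) ∈ rayTensor σ := by
      rw [← TensorProduct.tmul_add, ← hyz, tmul_one_nsmul]
      exact ⟨m, by positivity, rfl⟩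
    obtain ⟨hry, hrz⟩ := hσext _ (mem_qCone_of_mem hy) _ (mem_qCone_of_mem hz) hsumray
    obtain ⟨ey, hey0, heyq⟩ := hry
    obtain ⟨ez, hez0, hezq⟩ := hrz
    obtain ⟨ky, hky, hkyeq⟩ := ray_multiple Ξ σ y hσZ hσprim hy hy0 ey hey0 heyq
    obtain ⟨kz, hkz, hkzeq⟩ := ray_multiple Ξ σ z hσZ hσprim hz hz0 ez hez0 hezq
    have hkym : m ≤ ky := Nat.find_min' hex ⟨hky, by rw [← hkyeq]; exact hy⟩
    have hkzm : m ≤ kz := Nat.find_min' hex ⟨hkz, by rw [← hkzeq]; exact hz⟩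
    have hsum2 : (ky + kz) • σ = m • σ := by
      rw [add_smul, ← hkyeq, ← hkzeq, hyz]
    have : ky + kz = m := by
      have h1 : ((ky + kz : ℕ) : ℤ) • σ = ((m : ℕ) : ℤ) • σ := by
        rw [natCast_zsmul, natCast_zsmul]; exact hsum2
      have h2 : (((ky + kz : ℕ) : ℤ) - ((m : ℕ) : ℤ)) • σ = 0 := by
        rw [sub_smul, h1, sub_self]
      rcases smul_eq_zero.mp h2 with h | h
      · omega
      · exact absurd h hσ0
    omega
  have hΦm : m • σ ∈ Φ := by
    apply hΦ _ hmmem _ hindec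
    intro h
    have h2 : ((m : ℤ)) • σ = 0 := by rw [natCast_zsmul]; exact h
    rcases smul_eq_zero.mp h2 with h3 | h3
    · simp at h3; omega
    · exact hσ0 h3
  have hσΦ : σ ∈ AddSubgroup.closure Φ := by
    have hle : AddSubgroup.closure (Ξ : Set Λ) ≤ AddSubgroup.closure Φ :=
      (AddSubgroup.closure_le _).mpr fun x hx => mem_zspan_indec Ξ hΞfg hsharp Φ hΦ x hx
    exact hle hσZ
  have hm1 : m = 1 := hΦprim _ hΦm m σ hmpos hσΦ rfl
  rw [hm1, one_nsmul] at hmmem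
  exact hmmem

end Core

/-- Let `Λ` be a finitely generated free abelian group and `Ξ ⊆ Λ` a
finitely generated submonoid with `Ξ ∩ (−Ξ) = {0}`.  Suppose `Φ ⊆ Λ` contains every
indecomposable element of `Ξ`, and every element of `Φ` is primitive in the subgroup `ℤΦ`.
If `σ ∈ ℤΞ` is primitive in `ℤΞ` and `ℚ≥0·σ` is an extremal ray of the cone
`ℚ≥0Ξ ⊆ Λ ⊗_ℤ ℚ`, then `σ ∈ Ξ`.  In particular, if the saturation
`Ξ^sat = ℤΞ ∩ ℚ≥0Ξ` is a free commutative monoid, then `Ξ = Ξ^sat`. -/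
theorem root_monoid_saturated_and_free
    {Λ : Type*} [AddCommGroup Λ] [Module.Free ℤ Λ] [Module.Finite ℤ Λ]
    (Ξ : AddSubmonoid Λ) (hΞfg : Ξ.FG)
    (hsharp : ∀ x ∈ Ξ, -x ∈ Ξ → x = 0)
    (Φ : Set Λ)
    (hΦ : ∀ x ∈ Ξ, x ≠ 0 →
      (¬ ∃ y ∈ Ξ, ∃ z ∈ Ξ, y ≠ 0 ∧ z ≠ 0 ∧ x = y + z) → x ∈ Φ)
    (hΦprim : ∀ x ∈ Φ, ∀ (n : ℕ) (w : Λ), 0 < n → w ∈ AddSubgroup.closure Φ →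
      x = n • w → n = 1)
    (σ : Λ) (hσZ : σ ∈ AddSubgroup.closure (Ξ : Set Λ))
    (hσprim : ∀ (n : ℕ) (w : Λ), 0 < n → w ∈ AddSubgroup.closure (Ξ : Set Λ) →
      σ = n • w → n = 1)
    (hσmem : (1 : ℚ) ⊗ₜ[ℤ] σ ∈ qConeTensor Ξ)
    (hσne : (1 : ℚ) ⊗ₜ[ℤ] σ ≠ 0)
    (hσext : ∀ x ∈ qConeTensor Ξ, ∀ y ∈ qConeTensor Ξ,
      x + y ∈ rayTensor σ → x ∈ rayTensor σ ∧ y ∈ rayTensor σ) :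
    σ ∈ Ξ ∧
    ((∃ s : Finset Λ,
        (∀ x ∈ s, x ∈ AddSubgroup.closure (Ξ : Set Λ) ∧ (1 : ℚ) ⊗ₜ[ℤ] x ∈ qConeTensor Ξ) ∧
        ∀ x : Λ, x ∈ AddSubgroup.closure (Ξ : Set Λ) ∧ (1 : ℚ) ⊗ₜ[ℤ] x ∈ qConeTensor Ξ →
          ∃! c : Λ → ℕ, (∀ y ∉ s, c y = 0) ∧ x = ∑ y ∈ s, c y • y) →
      (Ξ : Set Λ) =
        {x : Λ | x ∈ AddSubgroup.closure (Ξ : Set Λ) ∧ (1 : ℚ) ⊗ₜ[ℤ] x ∈ qConeTensor Ξ}) := by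
  
  classical
  refine ⟨core_mem Ξ hΞfg hsharp Φ hΦ hΦprim σ hσZ hσprim hσmem hσne hσext, ?_⟩
  rintro ⟨s, hs, huniq⟩
  have hsub : ∀ x ∈ Ξ, x ∈ AddSubgroup.closure (Ξ : Set Λ) ∧ (1:ℚ) ⊗ₜ[ℤ] x ∈ qConeTensor Ξ :=
    fun x hx => ⟨AddSubgroup.subset_closure hx, mem_qCone_of_mem hx⟩
  have zIndep : ∀ a : Λ → ℤ, ∑ y ∈ s, a y • y = 0 → ∀ y ∈ s, a y = 0 := by
    intro a ha
    have hPN : ∑ y ∈ s, (a y).toNat • y = ∑ y ∈ s, (-(a y)).toNat • y := by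
      apply eq_of_sub_eq_zero
      rw [← Finset.sum_sub_distrib, ← ha]
      refine Finset.sum_congr rfl fun y _ => ?_
      have hz : (((a y).toNat : ℤ)) - (((-(a y)).toNat : ℤ)) = a y := by omega
      calc (a y).toNat • y - (-(a y)).toNat • y
          = (((a y).toNat : ℤ)) • y - (((-(a y)).toNat : ℤ)) • y := by
            rw [natCast_zsmul, natCast_zsmul]
        _ = ((((a y).toNat : ℤ)) - (((-(a y)).toNat : ℤ))) • y := (sub_smul _ _ _).symm
        _ = a y • y := by rw [hz]
    have hPmem : (∑ y ∈ s, (a y).toNat • y) ∈ AddSubgroup.closure (Ξ : Set Λ) ∧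
        (1:ℚ) ⊗ₜ[ℤ] (∑ y ∈ s, (a y).toNat • y) ∈ qConeTensor Ξ := by
      constructor
      · exact AddSubgroup.sum_mem _ fun y hy => nsmul_mem (hs y hy).1 _
      · rw [tmul_one_sum]
        apply qCone_sum
        intro y hy
        rw [tmul_one_nsmul]
        exact qCone_smul (by positivity) (hs y hy).2
    obtain ⟨c0, hc0, hu0⟩ := huniq _ hPmem
    have h1 : (fun y => if y ∈ s then (a y).toNat else 0) = c0 := by
      apply hu0
      refine ⟨fun y hy => by simp [hy], ?_⟩
      exact (Finset.sum_congr rfl fun y hy => by rw [if_pos hy]).symm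
    have h2 : (fun y => if y ∈ s then (-(a y)).toNat else 0) = c0 := by
      apply hu0
      refine ⟨fun y hy => by simp [hy], ?_⟩
      rw [hPN]
      exact (Finset.sum_congr rfl fun y hy => by rw [if_pos hy]).symm
    intro y hy
    have h3 := congrFun (h1.trans h2.symm) y
    simp only [if_pos hy] at h3
    omega
  have qIndep : ∀ p : Λ → ℚ, ∑ y ∈ s, p y • ((1:ℚ) ⊗ₜ[ℤ] y) = 0 → ∀ y ∈ s, p y = 0 := by
    intro p hp y hy
    obtain ⟨d, mz, hd, hm⟩ := clear_denoms s p
    have hz : ∑ z ∈ s, mz z • z = 0 := by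
      apply tmul_one_eq_zero
      rw [tmul_one_sum]
      have h1 : ∀ z ∈ s, (1:ℚ) ⊗ₜ[ℤ] (mz z • z) = (d:ℚ) • (p z • ((1:ℚ) ⊗ₜ[ℤ] z)) := by
        intro z hz
        rw [tmul_one_zsmul, (hm z hz).1, smul_smul, mul_comm (p z) ((d:ℚ))]
      rw [Finset.sum_congr rfl h1, ← Finset.smul_sum, hp, smul_zero]
    have h0 := zIndep mz hz y hy
    have h2 := (hm y hy).1
    rw [h0] at h2
    simp only [Int.cast_zero] at h2
    have hd0 : ((d:ℚ)) ≠ 0 := by positivity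
    rcases mul_eq_zero.mp h2.symm with h | h
    · exact h
    · exact absurd h hd0
  have hs0 : ∀ y ∈ s, y ≠ (0:Λ) := by
    intro y hy hy0
    obtain ⟨c0, hc0, hu0⟩ := huniq 0 ⟨zero_mem _, by rw [TensorProduct.tmul_zero]; exact qCone_zero Ξ⟩
    have h1 : (fun _ : Λ => (0:ℕ)) = c0 := hu0 _ ⟨fun _ _ => rfl, by simp⟩
    have hsum : ∑ z ∈ s, (if z = y then (1:ℕ) else 0) • z = y := by
      rw [Finset.sum_eq_single_of_mem y hy]
      · simp
      · intro z hz hne; simp [hne]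
    have h2 : (fun z : Λ => if z = y then (1:ℕ) else 0) = c0 := by
      apply hu0
      refine ⟨fun z hz => if_neg (fun h => hz (by rw [h]; exact hy)), ?_⟩
      rw [hsum]
      exact hy0.symm
    have h3 := congrFun (h1.trans h2.symm) y
    simp only [if_pos rfl] at h3
    exact absurd h3.symm one_ne_zero
  have cone_rep : ∀ v ∈ qConeTensor Ξ, ∃ p : Λ → ℚ, (∀ y ∈ s, 0 ≤ p y) ∧
      v = ∑ y ∈ s, p y • ((1:ℚ) ⊗ₜ[ℤ] y) := by
    rintro v ⟨t, c, htc, rfl⟩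
    have hch : ∀ x : Λ, ∃ b : Λ → ℕ, x ∈ t → x = ∑ y ∈ s, b y • y := by
      intro x
      by_cases hx : x ∈ t
      · obtain ⟨b, hb, _⟩ := huniq x (hsub x (htc x hx).1)
        exact ⟨b, fun _ => hb.2⟩
      · exact ⟨0, fun h => absurd h hx⟩
    choose b hb using hch
    refine ⟨fun y => ∑ x ∈ t, c x * (b x y), fun y _ =>
      Finset.sum_nonneg fun x hx => mul_nonneg (htc x hx).2 (Nat.cast_nonneg _), ?_⟩
    calc ∑ x ∈ t, c x • ((1:ℚ) ⊗ₜ[ℤ] x)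
        = ∑ x ∈ t, ∑ y ∈ s, (c x * (b x y)) • ((1:ℚ) ⊗ₜ[ℤ] y) := by
          refine Finset.sum_congr rfl fun x hx => ?_
          have hx1 : (1:ℚ) ⊗ₜ[ℤ] x = ∑ y ∈ s, ((b x y : ℚ)) • ((1:ℚ) ⊗ₜ[ℤ] y) := by
            conv_lhs => rw [hb x hx]
            rw [tmul_one_sum]
            exact Finset.sum_congr rfl fun y _ => tmul_one_nsmul _ _
          rw [hx1, Finset.smul_sum]
          exact Finset.sum_congr rfl fun y _ => by rw [smul_smul]
      _ = ∑ y ∈ s, ∑ x ∈ t, (c x * (b x y)) • ((1:ℚ) ⊗ₜ[ℤ] y) := Finset.sum_comm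
      _ = ∑ y ∈ s, (∑ x ∈ t, c x * (b x y)) • ((1:ℚ) ⊗ₜ[ℤ] y) :=
          Finset.sum_congr rfl fun y _ => (Finset.sum_smul).symm
  have hbasis : ∀ y₀ ∈ s, y₀ ∈ Ξ := by
    intro y₀ hy₀
    have hy0ne : y₀ ≠ 0 := hs0 y₀ hy₀
    have h1ne : (1:ℚ) ⊗ₜ[ℤ] y₀ ≠ 0 := fun h => hy0ne (tmul_one_eq_zero h)
    have hZle : AddSubgroup.closure (Ξ : Set Λ) ≤ AddSubgroup.closure (↑s : Set Λ) := by
      apply (AddSubgroup.closure_le _).mpr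
      intro x hx
      obtain ⟨c0, hc0, _⟩ := huniq x (hsub x hx)
      rw [hc0.2]
      exact AddSubgroup.sum_mem _ fun y hy =>
        nsmul_mem (AddSubgroup.subset_closure (Finset.mem_coe.mpr hy)) _
    have hprim : ∀ (n : ℕ) (w : Λ), 0 < n → w ∈ AddSubgroup.closure (Ξ : Set Λ) →
        y₀ = n • w → n = 1 := by
      intro n w hn hw hnw
      have hw' : w ∈ Submodule.span ℤ (↑s : Set Λ) := by
        have h2 := hZle hw
        rw [← Submodule.span_int_eq_addSubgroupClosure] at h2
        exact (Submodule.mem_toAddSubgroup _).mp h2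
      obtain ⟨g, -, hg⟩ := Submodule.mem_span_finset.mp hw'
      have he1 : ∑ y ∈ s, ((n : ℤ) * g y - (if y = y₀ then 1 else 0)) • y = 0 := by
        have hA : ∑ y ∈ s, ((n:ℤ) * g y) • y = y₀ := by
          calc ∑ y ∈ s, ((n:ℤ) * g y) • y = ∑ y ∈ s, (n:ℤ) • (g y • y) :=
                Finset.sum_congr rfl fun y _ => mul_smul _ _ _
            _ = (n:ℤ) • ∑ y ∈ s, g y • y := (Finset.smul_sum).symm
            _ = (n:ℤ) • w := by rw [hg]
            _ = n • w := natCast_zsmul _ _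
            _ = y₀ := hnw.symm
        have hB : ∑ y ∈ s, ((if y = y₀ then (1:ℤ) else 0)) • y = y₀ := by
          rw [Finset.sum_eq_single_of_mem y₀ hy₀]
          · simp
          · intro z hz hne; simp [hne]
        rw [Finset.sum_congr rfl fun y _ => sub_smul _ _ y, Finset.sum_sub_distrib, hA, hB,
          sub_self]
      have h2 := zIndep _ he1 y₀ hy₀
      rw [if_pos rfl] at h2
      have h3 : (n:ℤ) * g y₀ = 1 := by omega
      rcases Int.isUnit_iff.mp (IsUnit.of_mul_eq_one _ h3) with h | h
      · exact_mod_cast h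
      · exfalso; omega
    have hext : ∀ x ∈ qConeTensor Ξ, ∀ z ∈ qConeTensor Ξ,
        x + z ∈ rayTensor y₀ → x ∈ rayTensor y₀ ∧ z ∈ rayTensor y₀ := by
      intro x hx z hz hray
      obtain ⟨e, he0, heq⟩ := hray
      obtain ⟨p, hp0, hpx⟩ := cone_rep x hx
      obtain ⟨r, hr0, hrz⟩ := cone_rep z hz
      have hco : ∀ y ∈ s, p y + r y - (if y = y₀ then e else 0) = 0 := by
        apply qIndep
        have hB : ∑ y ∈ s, (if y = y₀ then e else 0) • ((1:ℚ) ⊗ₜ[ℤ] y)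
            = e • ((1:ℚ) ⊗ₜ[ℤ] y₀) := by
          rw [Finset.sum_eq_single_of_mem y₀ hy₀]
          · simp
          · intro z' hz' hne; simp [hne]
        have hsp : ∀ y ∈ s, (p y + r y - (if y = y₀ then e else 0)) • ((1:ℚ) ⊗ₜ[ℤ] y)
            = p y • ((1:ℚ) ⊗ₜ[ℤ] y) + r y • ((1:ℚ) ⊗ₜ[ℤ] y)
              - (if y = y₀ then e else 0) • ((1:ℚ) ⊗ₜ[ℤ] y) := fun y _ => by
          rw [sub_smul, add_smul]
        rw [Finset.sum_congr rfl hsp, Finset.sum_sub_distrib, Finset.sum_add_distrib, hB,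
          ← hpx, ← hrz, heq, sub_self]
      constructor
      · refine ⟨p y₀, hp0 y₀ hy₀, ?_⟩
        rw [hpx, Finset.sum_eq_single_of_mem y₀ hy₀]
        · intro z' hz' hne
          have h5 := hco z' hz'
          rw [if_neg hne] at h5
          have hp' := hp0 z' hz'
          have hr' := hr0 z' hz'
          have hpz : p z' = 0 := by linarith
          rw [hpz, zero_smul]
      · refine ⟨r y₀, hr0 y₀ hy₀, ?_⟩
        rw [hrz, Finset.sum_eq_single_of_mem y₀ hy₀]
        · intro z' hz' hne
          have h5 := hco z' hz'
          rw [if_neg hne] at h5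
          have hp' := hp0 z' hz'
          have hr' := hr0 z' hz'
          have hrz' : r z' = 0 := by linarith
          rw [hrz', zero_smul]
    exact core_mem Ξ hΞfg hsharp Φ hΦ hΦprim y₀ (hs y₀ hy₀).1 hprim (hs y₀ hy₀).2 h1ne hext
  ext x
  simp only [Set.mem_setOf_eq, SetLike.mem_coe]
  constructor
  · exact fun hx => hsub x hx
  · intro hx
    obtain ⟨c0, hc0, _⟩ := huniq x hx
    rw [hc0.2]
    exact AddSubmonoid.sum_mem _ fun y hy => nsmul_mem (hbasis y hy) _
end
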